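/- arXiv:2210.05269 — 2 statements merged into one kernel-verified Lean document; each statement's English description precedes it below -/
import Mathlib

section
/- For any ploidy profile m on a finite set X, and for any edit distance D on the set of multiple-labelled trees realizing m such that the graph whose vertices are these trees, with an edge between any two trees at D-distance 1, is connected, the ploidy profile space P(m) is a connected graph. -/
/-!
Formalization preamble for "Autopolyploidy, allopolyploidy, and phylogenetic
networks with horizontal arcs" (Huber & Maher).

Networks are finite directed multigraphs whose vertices and arcs are (finitely
many) natural numbers; parallel arcs (beads) are allowed, loops are not.
-/

namespace Ploidy

/-- A finite directed multigraph: both vertex names and arc identifiers are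
natural numbers; `src`/`tgt` give the endpoints of each arc. -/
structure Net where
  verts : Finset ℕ
  arcs : Finset ℕ
  src : ℕ → ℕ
  tgt : ℕ → ℕ

/-- The indegree of a vertex. -/
def inDeg (G : Net) (v : ℕ) : ℕ := (G.arcs.filter fun a => G.tgt a = v).card

/-- The outdegree of a vertex. -/
def outDeg (G : Net) (v : ℕ) : ℕ := (G.arcs.filter fun a => G.src a = v).card

def IsLeafN (G : Net) (v : ℕ) : Prop := v ∈ G.verts ∧ inDeg G v = 1 ∧ outDeg G v = 0
def IsTreeVert (G : Net) (v : ℕ) : Prop := v ∈ G.verts ∧ inDeg G v = 1 ∧ outDeg G v = 2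
def IsReticN (G : Net) (v : ℕ) : Prop := v ∈ G.verts ∧ inDeg G v = 2 ∧ outDeg G v = 1
def IsRootN (G : Net) (v : ℕ) : Prop := v ∈ G.verts ∧ inDeg G v = 0

instance (G : Net) (v : ℕ) : Decidable (IsLeafN G v) :=
  decidable_of_iff (v ∈ G.verts ∧ inDeg G v = 1 ∧ outDeg G v = 0) Iff.rfl

/-- `IsWalk G l u v`: the list of arcs `l` forms a directed walk from `u` to `v`. -/
def IsWalk (G : Net) : List ℕ → ℕ → ℕ → Prop
  | [], u, v => u = v ∧ u ∈ G.verts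
  | a :: l, u, v => a ∈ G.arcs ∧ G.src a = u ∧ IsWalk G l (G.tgt a) v

/-- The number of directed paths from `u` to `v` (in a DAG every directed walk is
a path, and there are finitely many of them). -/
noncomputable def nPaths (G : Net) (u v : ℕ) : ℕ := Set.ncard {l : List ℕ | IsWalk G l u v}

/-- `a` is an arc from `u` to `v`. -/
def ArcFT (G : Net) (a u v : ℕ) : Prop := a ∈ G.arcs ∧ G.src a = u ∧ G.tgt a = v

/-- `u` is a parent of `v`. -/
def IsParent (G : Net) (u v : ℕ) : Prop := ∃ a, ArcFT G a u v

/-- `w` is below `u` (reachable from `u` by a directed walk, possibly `u = w`). -/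
def BelowV (G : Net) (u w : ℕ) : Prop := ∃ l, IsWalk G l u w

/-- `v` is an end vertex of a pair of parallel arcs (a bead). -/
def InBead (G : Net) (v : ℕ) : Prop :=
  ∃ a b, a ∈ G.arcs ∧ b ∈ G.arcs ∧ a ≠ b ∧ G.src a = G.src b ∧ G.tgt a = G.tgt b ∧
    (G.src a = v ∨ G.tgt a = v)

/-- `G` is beadless: there is no pair of parallel arcs. -/
def Beadless (G : Net) : Prop := ∀ v, ¬ InBead G v

/-- `G` is a (rooted, binary) phylogenetic network in the sense of Huber–Maher:
a rooted DAG, possibly with beads but without loops, with a unique root of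
indegree 0 and outdegree 2, all of whose other vertices are leaves, tree
vertices or reticulation vertices. -/
structure IsPhylo (G : Net) : Prop where
  src_mem : ∀ a ∈ G.arcs, G.src a ∈ G.verts
  tgt_mem : ∀ a ∈ G.arcs, G.tgt a ∈ G.verts
  no_loop : ∀ a ∈ G.arcs, G.src a ≠ G.tgt a
  acyclic : ∀ (v : ℕ) (l : List ℕ), l ≠ [] → ¬ IsWalk G l v v
  root_exu : ∃! r, IsRootN G r
  root_out : ∀ r, IsRootN G r → outDeg G r = 2
  types : ∀ v ∈ G.verts, IsRootN G v ∨ IsLeafN G v ∨ IsTreeVert G v ∨ IsReticN G v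

/-- An HGT-consistent labelling: (P1), (P2) and (P3) (the latter required only for
reticulation vertices not contained in beads). -/
def IsHGT (G : Net) (t : ℕ → ℝ) : Prop :=
  (∀ v ∈ G.verts, 0 ≤ t v) ∧
  (∀ a ∈ G.arcs,
      (IsReticN G (G.tgt a) → t (G.src a) ≤ t (G.tgt a)) ∧
      (¬ IsReticN G (G.tgt a) → t (G.src a) < t (G.tgt a))) ∧
  (∀ u ∈ G.verts, ¬ IsLeafN G u → ∃ v, IsParent G u v ∧ t u < t v) ∧
  (∀ v, IsReticN G v → ¬ InBead G v → ∃! u, IsParent G u v ∧ t u = t v)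

/-- `v` is a reticulation vertex (not contained in a bead) violating (P3). -/
def ViolatesP3 (G : Net) (t : ℕ → ℝ) (v : ℕ) : Prop :=
  IsReticN G v ∧ ¬ InBead G v ∧ ¬ (∃! u, IsParent G u v ∧ t u = t v)

/-- A weak HGT-consistent labelling: (P1), (P2) and (P3'): at most one reticulation
vertex `v`, with distinct parents `u₁, u₂` such that `u₂` is below `u₁` and
`t u₁ ≠ t v ≠ t u₂`, violates (P3). -/
def IsWeakHGT (G : Net) (t : ℕ → ℝ) : Prop :=
  (∀ v ∈ G.verts, 0 ≤ t v) ∧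
  (∀ a ∈ G.arcs,
      (IsReticN G (G.tgt a) → t (G.src a) ≤ t (G.tgt a)) ∧
      (¬ IsReticN G (G.tgt a) → t (G.src a) < t (G.tgt a))) ∧
  (∀ u ∈ G.verts, ¬ IsLeafN G u → ∃ v, IsParent G u v ∧ t u < t v) ∧
  (∀ v w, ViolatesP3 G t v → ViolatesP3 G t w → v = w) ∧
  (∀ v, ViolatesP3 G t v →
      ∃ u1 u2, u1 ≠ u2 ∧ IsParent G u1 v ∧ IsParent G u2 v ∧ BelowV G u1 u2 ∧
        t u1 ≠ t v ∧ t u2 ≠ t v)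

/-! ### Ploidy profiles and the simplification sequence -/

/-- A ploidy profile: a nonempty descending list of positive integers; the entry at
(0-based) position `i` is indexed by the taxon `x_{i+1}`. -/
def IsProfileL (l : List ℕ) : Prop := l ≠ [] ∧ l.Pairwise (· ≥ ·) ∧ ∀ x ∈ l, 1 ≤ x

/-- A simple ploidy profile: first component at least 2, all other components 1. -/
def IsSimpleP (l : List ℕ) : Prop := l ≠ [] ∧ 2 ≤ l.headI ∧ ∀ x ∈ l.tail, x = 1

/-- A strictly simple ploidy profile. -/
def IsStrictlySimpleP (l : List ℕ) : Prop := IsSimpleP l ∧ l.length = 1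

/-- Insert `x` into a descending list, directly after the last occurrence of the
value `x` (i.e. after all entries `≥ x`). -/
def insertDesc (x : ℕ) : List ℕ → List ℕ
  | [] => [x]
  | y :: ys => if x ≤ y then y :: insertDesc x ys else x :: y :: ys

/-- One step of the simplification process for ploidy profiles; simple profiles are
fixed points.  With `α = m₁ - m₂`: if `α = 0` delete `m₁`; if `α > m₂` replace `m₁`
by `α`; if `0 < α ≤ m₂` delete `m₁` and insert `α` directly after the last
occurrence of the value `α`. -/
def simpStep (l : List ℕ) : List ℕ :=
  if 2 ≤ l.headI ∧ ∀ x ∈ l.tail, x = 1 then l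
  else
    match l with
    | m1 :: m2 :: rest =>
        if m1 = m2 then m2 :: rest
        else if m2 < m1 - m2 then (m1 - m2) :: m2 :: rest
        else insertDesc (m1 - m2) (m2 :: rest)
    | _ => l

/-- `mt` is the (simple) terminal element of the simplification sequence of `m`. -/
def IsTerminal (m mt : List ℕ) : Prop := IsSimpleP mt ∧ ∃ k, simpStep^[k] m = mt

/-- A practical ploidy profile: simple but not strictly simple, or `(2^l)`, `l ≥ 1`. -/
def Practical (l : List ℕ) : Prop :=
  (IsSimpleP l ∧ 2 ≤ l.length) ∨ (l.length = 1 ∧ ∃ j, 1 ≤ j ∧ l.headI = 2 ^ j)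

/-- An arc-rich (strictly simple) ploidy profile: the binary representation of its
single component has dimension at least two. -/
def ArcRich (l : List ℕ) : Prop :=
  l.length = 1 ∧ 2 ≤ l.headI ∧ 2 ≤ (Nat.bits l.headI).count true

/-! ### Realizations of ploidy profiles -/

/-- A network together with an indexing of its leaves by the positions of a
ploidy profile. -/
structure LNet where
  net : Net
  leaf : ℕ → ℕ

/-- `R` is a phylogenetic network realizing the ploidy profile `m`: the leaves of
`R.net` are bijectively indexed by the positions of `m` and, for every `i`, the
number of directed paths from the root to the leaf `R.leaf i` is the `i`-th
component of `m`. -/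
def RealizesL (R : LNet) (m : List ℕ) : Prop :=
  IsPhylo R.net ∧
  (∀ i < m.length, IsLeafN R.net (R.leaf i)) ∧
  (∀ i j, i < m.length → j < m.length → R.leaf i = R.leaf j → i = j) ∧
  (∀ v, IsLeafN R.net v → ∃ i < m.length, R.leaf i = v) ∧
  (∀ i < m.length, ∀ r, IsRootN R.net r → nPaths R.net r (R.leaf i) = m.getD i 0)

/-! ### Concrete constructions: bead chains and the core network `B(m)` -/

/-- Build a network from a list of arcs (as (source, target) pairs); arc
identifiers are positions in the list, so repeated pairs yield beads. -/
def mkNet (l : List (ℕ × ℕ)) : Net where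
  verts := (l.map Prod.fst ++ l.map Prod.snd).toFinset
  arcs := Finset.range l.length
  src := fun i => (l.getD i (0, 0)).1
  tgt := fun i => (l.getD i (0, 0)).2

/-- The chain `B(l)` of `l` beads with a pendant leaf: vertex `2*j` is the tree
vertex of the `(j+1)`-st bead, `2*j+1` its reticulation vertex `h_{j+1}`, there is
an arc from `h_j` to the tree vertex of the next bead, and `2*l` is the pendant
leaf `x₁` attached by the arc `(h_l, x₁)`. -/
def beadChain (l : ℕ) : Net :=
  mkNet ((List.range l).flatMap fun j => [(2*j, 2*j+1), (2*j, 2*j+1), (2*j+1, 2*j+2)])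

/-- The decreasing list `(i₁, …, i_k)` of exponents of the binary representation
of `m₁`. -/
def expList (m1 : ℕ) : List ℕ :=
  ((List.range (m1+1)).filter fun j => m1.testBit j).reverse

/-- First vertex code available for the leaves `x_2, …, x_n` in `BNet`. -/
def xBase (m1 : ℕ) : ℕ := 2 * (expList m1).headI + 2 * (expList m1).length + 10

/-- The arcs of the core network `B(m)` for the simple profile `(m₁, 1, …, 1)` on
`n` taxa: a chain of `i₁` beads with pendant leaf `x₁ = 0` (root is the vertex
`2`), one root arc subdivided by `s_k` and, for `2 ≤ j ≤ k`, an arc `(s_j, s_j')`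
where `s_j'` subdivides the outgoing arc of the reticulation vertex having exactly
`i_j` reticulation vertices strictly below it and `s_2, …, s_{k-1}` subdivide the
arc `(s_k, s_k')`; if `n ≥ 2` a caterpillar tree on the leaves `x_2, …, x_n`
(codes `xBase m₁ + i`) is attached via a subdivision vertex `w` (placed on a root
arc if `k = 1`, on `(s_k, s_k')` if `k = 2`, and on `(s_{k-1}, s_k')` if `k ≥ 3`). -/
def BArcs (m1 n : ℕ) : List (ℕ × ℕ) :=
  let E := expList m1
  let k := E.length
  let i1 := E.headI
  let hv : ℕ → ℕ := fun j => 2*j + 1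
  let tv : ℕ → ℕ := fun j => 2*j
  let nxt : ℕ → ℕ := fun j => if j = i1 then 0 else 2*j + 2
  let S' : ℕ → ℕ := fun j => 2*i1 + 2 + j
  let P : ℕ → ℕ := fun j => 2*i1 + k + 2 + j
  let w : ℕ := 2*i1 + 2*k + 4
  let L : ℕ := 2*i1 + 2*k + 10
  let x : ℕ → ℕ := fun i => L + i
  let cv : ℕ → ℕ := fun i => L + n + i
  let r : ℕ → ℕ := fun t => i1 - E.getD (t-1) 0
  let rootArcs : List (ℕ × ℕ) :=
    if 2 ≤ k then [(tv 1, hv 1), (tv 1, P k), (P k, hv 1)]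
    else if 2 ≤ n then [(tv 1, hv 1), (tv 1, w), (w, hv 1)]
    else [(tv 1, hv 1), (tv 1, hv 1)]
  let otherBeads : List (ℕ × ℕ) :=
    (List.range' 2 (i1 - 1)).flatMap fun j => [(tv j, hv j), (tv j, hv j)]
  let chainArcs : List (ℕ × ℕ) :=
    (List.range' 1 i1).flatMap fun j =>
      match (List.range' 2 (k-1)).find? (fun t => r t == j) with
      | some t => [(hv j, S' t), (S' t, nxt j)]
      | none => [(hv j, nxt j)]
  let sChain : List ℕ :=
    [P k] ++ (List.range' 2 (k-2)).map P ++ (if 2 ≤ n then [w] else []) ++ [S' k]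
  let sArcs : List (ℕ × ℕ) :=
    if 2 ≤ k then (sChain.zip sChain.tail) ++ (List.range' 2 (k-2)).map (fun j => (P j, S' j))
    else []
  let catArcs : List (ℕ × ℕ) :=
    if n ≤ 1 then []
    else if n = 2 then [(w, x 2)]
    else [(w, cv 2)] ++
      ((List.range' 2 (n-3)).flatMap fun i => [(cv i, x i), (cv i, cv (i+1))]) ++
      [(cv (n-1), x (n-1)), (cv (n-1), x n)]
  rootArcs ++ otherBeads ++ chainArcs ++ sArcs ++ catArcs

/-- The core network `B(m)` for a simple profile with first component `m1` on `n`
taxa. -/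
def BNet (m1 n : ℕ) : Net := mkNet (BArcs m1 n)

/-- The core network `B(m)` of a ploidy profile whose terminal element is `mt`,
together with its leaf indexing (leaf `0` is `x₁ = 0`, leaf `i` is `x_{i+1}`). -/
def BLNet (mt : List ℕ) : LNet where
  net := BNet mt.headI mt.length
  leaf := fun i => if i = 0 then 0 else xBase mt.headI + (i + 1)

/-- The naive realization of the simple profile `(m₁, 1, …, 1)` on `n` taxa: a
directed path `0, 1, …, n + 2m₁ - 3` (with `v_j = j - 1`, `w_i = m₁ + i - 3`,
`v_j' = n + 2m₁ - 3 - j` and `x₁ = n + 2m₁ - 3`) together with the arcs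
`(v_j, v_j')` and the pendant leaf arcs `(w_i, x_i)` with `x_i = n + 2m₁ + i`. -/
def naiveNet (m1 n : ℕ) : Net :=
  mkNet (((List.range (n + 2*m1 - 3)).map fun p => (p, p+1)) ++
    ((List.range' 1 (m1 - 1)).map fun j => (j - 1, n + 2*m1 - 3 - j)) ++
    ((List.range' 2 (n - 1)).map fun i => (m1 + i - 3, n + 2*m1 + i)))

/-! ### Cherry modification operations -/

/-- `reduce(a,b)`: delete the leaf `b` of the cherry `{a,b}` together with its
incoming arc and suppress the resulting degree-two vertex (collapsing the network
to the single vertex `a` when the common parent is the root). -/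
def ReduceOp (G G' : Net) : Prop :=
  ∃ a b p ea eb, a ≠ b ∧ IsLeafN G a ∧ IsLeafN G b ∧
    ArcFT G ea p a ∧ ArcFT G eb p b ∧ ea ≠ eb ∧
    G'.verts = (G.verts.erase b).erase p ∧
    G'.arcs = (G.arcs.erase eb).erase ea ∧
    ((IsRootN G p ∧ ∀ e ∈ G'.arcs, G'.src e = G.src e ∧ G'.tgt e = G.tgt e) ∨
     (∃ ep q, ArcFT G ep q p ∧
        (∀ e ∈ G'.arcs, e ≠ ep → G'.src e = G.src e ∧ G'.tgt e = G.tgt e) ∧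
        G'.src ep = q ∧ G'.tgt ep = a))

/-- `cut(a,b)`: delete the reticulation arc of the reticulate cherry `{a,b}` with
reticulation leaf `b`, suppressing the two resulting degree-two vertices. -/
def CutOp (G G' : Net) : Prop :=
  ∃ a b pa pb e1 e2 e3 e4 e5 q r,
    a ≠ b ∧ IsLeafN G a ∧ IsLeafN G b ∧ IsReticN G pb ∧
    ArcFT G e1 pa a ∧ ArcFT G e2 pb b ∧ ArcFT G e3 pa pb ∧
    ArcFT G e4 q pb ∧ e3 ≠ e4 ∧ ArcFT G e5 r pa ∧
    G'.verts = (G.verts.erase pa).erase pb ∧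
    G'.arcs = ((G.arcs.erase e3).erase e1).erase e2 ∧
    (∀ e ∈ G'.arcs, e ≠ e4 → e ≠ e5 → G'.src e = G.src e ∧ G'.tgt e = G.tgt e) ∧
    G'.src e5 = r ∧ G'.tgt e5 = a ∧
    G'.src e4 = q ∧ G'.tgt e4 = b

/-- `simp(a)`: for a type-1 degenerate cherry `{a}` (sole leaf whose parent is the
reticulation vertex of a bead), delete one arc of the bead, suppressing the
resulting degree-two vertex and collapsing the outgoing arc of the tree vertex of
the bead. -/
def SimpOp (G G' : Net) : Prop :=
  ∃ a h u e1 e2 e3,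
    IsLeafN G a ∧ (∀ w, IsLeafN G w → w = a) ∧ IsReticN G h ∧
    ArcFT G e1 u h ∧ ArcFT G e2 u h ∧ e1 ≠ e2 ∧ ArcFT G e3 h a ∧
    ((IsRootN G u ∧ G'.verts = {a} ∧ G'.arcs = ∅) ∨
     (∃ eu q, ArcFT G eu q u ∧
        G'.verts = (G.verts.erase h).erase u ∧
        G'.arcs = ((G.arcs.erase e2).erase e3).erase e1 ∧
        (∀ e ∈ G'.arcs, e ≠ eu → G'.src e = G.src e ∧ G'.tgt e = G.tgt e) ∧
        G'.src eu = q ∧ G'.tgt eu = a))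

/-- `trim(a)`: for a type-2 degenerate cherry `{a}` (sole leaf whose parent `p` is
a reticulation vertex with distinct parents `q₁, q₂`), delete the arc `(q₁,p)`
(case (a): there is a vertex `q` with arcs `(q,q₁)`, `(q,q₂)`, `(q₁,q₂)`),
respectively one of the two parallel arcs from `q` to `q₂` (case (b): there is an
arc `(q₁,q)` and a pair of parallel arcs from `q` to `q₂`), suppressing the two
resulting degree-two vertices. -/
def TrimOp (G G' : Net) : Prop :=
  ∃ a p g0, IsLeafN G a ∧ (∀ w, IsLeafN G w → w = a) ∧ IsReticN G p ∧ ArcFT G g0 p a ∧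
   ((∃ q q1 q2 f1 f2 f3 g1 g2,
      ArcFT G g1 q1 p ∧ ArcFT G g2 q2 p ∧ g1 ≠ g2 ∧ q1 ≠ q2 ∧
      ArcFT G f1 q q1 ∧ ArcFT G f2 q q2 ∧ ArcFT G f3 q1 q2 ∧
      G'.verts = (G.verts.erase q1).erase p ∧
      G'.arcs = ((G.arcs.erase g1).erase f3).erase g0 ∧
      (∀ e ∈ G'.arcs, e ≠ f1 → e ≠ g2 → G'.src e = G.src e ∧ G'.tgt e = G.tgt e) ∧
      G'.src f1 = q ∧ G'.tgt f1 = q2 ∧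
      G'.src g2 = q2 ∧ G'.tgt g2 = a) ∨
    (∃ q q1 q2 eq' f1 f2 g1 g2,
      ArcFT G g1 q1 p ∧ ArcFT G g2 q2 p ∧ g1 ≠ g2 ∧ q1 ≠ q2 ∧
      ArcFT G eq' q1 q ∧ ArcFT G f1 q q2 ∧ ArcFT G f2 q q2 ∧ f1 ≠ f2 ∧
      G'.verts = (G.verts.erase q).erase q2 ∧
      G'.arcs = ((G.arcs.erase f2).erase f1).erase g2 ∧
      (∀ e ∈ G'.arcs, e ≠ eq' → G'.src e = G.src e ∧ G'.tgt e = G.tgt e) ∧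
      G'.src eq' = q1 ∧ G'.tgt eq' = p))

/-- A single cherry modification operation: reduce, cut or simp. -/
def CherryModOp (G G' : Net) : Prop := ReduceOp G G' ∨ CutOp G G' ∨ SimpOp G G'

/-- A single weak cherry modification operation: reduce, cut, simp or trim. -/
def WeakCherryModOp (G G' : Net) : Prop := CherryModOp G G' ∨ TrimOp G G'

/-- The network consisting of a single vertex (and no arcs). -/
def IsSingleV (G : Net) : Prop := ∃ v, G.verts = {v} ∧ G.arcs = ∅

/-- `G` admits a complete cherry modification sequence, i.e. `G` is an orchard. -/
def IsOrchardN (G : Net) : Prop :=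
  ∃ G', Relation.ReflTransGen CherryModOp G G' ∧ IsSingleV G'

/-- `G` admits a complete weak cherry modification sequence, i.e. `G` is a weak
orchard. -/
def IsWeakOrchardN (G : Net) : Prop :=
  ∃ G', Relation.ReflTransGen WeakCherryModOp G G' ∧ IsSingleV G'

/-! ### The traceback through the simplification sequence -/

/-- Traceback step in case `α = 0`: replace the leaf indexing the first component
of `m''` by a cherry on two new leaves. -/
def CherryExpandOp (R'' R' : LNet) : Prop :=
  ∃ y1 y2 b1 b2,
    y1 ∉ R''.net.verts ∧ y2 ∉ R''.net.verts ∧ y1 ≠ y2 ∧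
    b1 ∉ R''.net.arcs ∧ b2 ∉ R''.net.arcs ∧ b1 ≠ b2 ∧
    R'.net.verts = R''.net.verts ∪ {y1, y2} ∧
    R'.net.arcs = R''.net.arcs ∪ {b1, b2} ∧
    (∀ a ∈ R''.net.arcs, R'.net.src a = R''.net.src a ∧ R'.net.tgt a = R''.net.tgt a) ∧
    R'.net.src b1 = R''.leaf 0 ∧ R'.net.tgt b1 = y1 ∧
    R'.net.src b2 = R''.leaf 0 ∧ R'.net.tgt b2 = y2 ∧
    R'.leaf 0 = y1 ∧ R'.leaf 1 = y2 ∧ (∀ i, 1 ≤ i → R'.leaf (i + 1) = R''.leaf i)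

/-- Traceback step in case `α > m₂'`: subdivide the incoming arcs of the leaves
indexing the first and second components of `m''` by new vertices `u` and `v` and
add the arc `(v,u)`. -/
def AddArcOp (R'' R' : LNet) : Prop :=
  ∃ u v a0 a1 b0 b1 c,
    u ∉ R''.net.verts ∧ v ∉ R''.net.verts ∧ u ≠ v ∧
    a0 ∈ R''.net.arcs ∧ R''.net.tgt a0 = R''.leaf 0 ∧
    a1 ∈ R''.net.arcs ∧ R''.net.tgt a1 = R''.leaf 1 ∧ a0 ≠ a1 ∧
    b0 ∉ R''.net.arcs ∧ b1 ∉ R''.net.arcs ∧ c ∉ R''.net.arcs ∧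
    b0 ≠ b1 ∧ b0 ≠ c ∧ b1 ≠ c ∧
    R'.net.verts = R''.net.verts ∪ {u, v} ∧
    R'.net.arcs = R''.net.arcs ∪ {b0, b1, c} ∧
    (∀ a ∈ R''.net.arcs, a ≠ a0 → a ≠ a1 →
        R'.net.src a = R''.net.src a ∧ R'.net.tgt a = R''.net.tgt a) ∧
    R'.net.src a0 = R''.net.src a0 ∧ R'.net.tgt a0 = u ∧
    R'.net.src a1 = R''.net.src a1 ∧ R'.net.tgt a1 = v ∧
    R'.net.src b0 = u ∧ R'.net.tgt b0 = R''.leaf 0 ∧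
    R'.net.src b1 = v ∧ R'.net.tgt b1 = R''.leaf 1 ∧
    R'.net.src c = v ∧ R'.net.tgt c = u ∧
    (∀ i, R'.leaf i = R''.leaf i)

/-- Traceback step in case `0 < α ≤ m₂'`, where the inserted component `α` sits at
(0-based) position `j` of `m''`: subdivide the incoming arc of the leaf indexing
`α` by a vertex `v`, replace the leaf indexing the first component of `m''` by a
cherry, subdivide the incoming arc of one of the two new cherry leaves by a vertex
`u`, add the arc `(v,u)` and delete the leaf indexing `α` together with its
incoming arc, suppressing the resulting degree-two vertex. -/
def InsertBackOp (j : ℕ) (R'' R' : LNet) : Prop :=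
  ∃ u y1 y2 c1 c2 c3 az,
    u ∉ R''.net.verts ∧ y1 ∉ R''.net.verts ∧ y2 ∉ R''.net.verts ∧
    u ≠ y1 ∧ u ≠ y2 ∧ y1 ≠ y2 ∧
    c1 ∉ R''.net.arcs ∧ c2 ∉ R''.net.arcs ∧ c3 ∉ R''.net.arcs ∧
    c1 ≠ c2 ∧ c1 ≠ c3 ∧ c2 ≠ c3 ∧
    az ∈ R''.net.arcs ∧ R''.net.tgt az = R''.leaf j ∧
    R'.net.verts = (R''.net.verts.erase (R''.leaf j)) ∪ {u, y1, y2} ∧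
    R'.net.arcs = R''.net.arcs ∪ {c1, c2, c3} ∧
    (∀ a ∈ R''.net.arcs, a ≠ az →
        R'.net.src a = R''.net.src a ∧ R'.net.tgt a = R''.net.tgt a) ∧
    R'.net.src az = R''.net.src az ∧ R'.net.tgt az = u ∧
    R'.net.src c1 = R''.leaf 0 ∧ R'.net.tgt c1 = u ∧
    R'.net.src c2 = u ∧ R'.net.tgt c2 = y1 ∧
    R'.net.src c3 = R''.leaf 0 ∧ R'.net.tgt c3 = y2 ∧
    R'.leaf 0 = y1 ∧ R'.leaf 1 = y2 ∧
    (∀ i, 1 ≤ i → i < j → R'.leaf (i + 1) = R''.leaf i) ∧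
    (∀ i, j < i → R'.leaf i = R''.leaf i)

/-- One step of the traceback: `R'` is a realization of the non-simple profile `m'`
obtained from the realization `R''` of `simpStep m'` by the surgery dictated by the
case (`α = 0`, `α > m₂'` or `0 < α ≤ m₂'`) that produced `simpStep m'` from `m'`. -/
def TraceStep (m' : List ℕ) (R'' R' : LNet) : Prop :=
  2 ≤ m'.length ∧ ¬ IsSimpleP m' ∧
  ((m'.headI = m'.tail.headI ∧ CherryExpandOp R'' R') ∨
   (m'.tail.headI < m'.headI - m'.tail.headI ∧ AddArcOp R'' R') ∨
   (0 < m'.headI - m'.tail.headI ∧ m'.headI - m'.tail.headI ≤ m'.tail.headI ∧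
     InsertBackOp
       ((m'.tail.takeWhile fun y => decide (m'.headI - m'.tail.headI ≤ y)).length)
       R'' R'))

/-- `TracebackFrom core m N`: `N` is a network `N(m)` obtainable by the traceback
through the simplification sequence of `m`, initialized with the core network
`core`. -/
inductive TracebackFrom (core : LNet) : List ℕ → LNet → Prop
  | base (m : List ℕ) : IsSimpleP m → TracebackFrom core m core
  | step (m' : List ℕ) (R'' R' : LNet) :
      TracebackFrom core (simpStep m') R'' → TraceStep m' R'' R' →
      TracebackFrom core m' R'

/-! ### Tree-based and tree-child networks -/

def subIn (G : Net) (A : Finset ℕ) (v : ℕ) : ℕ := (A.filter fun a => G.tgt a = v).card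
def subOut (G : Net) (A : Finset ℕ) (v : ℕ) : ℕ := (A.filter fun a => G.src a = v).card

/-- `G` is tree-based: some subset `A` of its arcs forms a spanning subdivision of a
rooted phylogenetic tree (with one extra incoming arc added to its root) whose
leaves are exactly the leaves of `G`; all remaining arcs of `G` join subdivision
vertices, and every subdivision vertex has total degree 3 in `G`. -/
def IsTreeBased (G : Net) : Prop :=
  ∃ A : Finset ℕ, A ⊆ G.arcs ∧
    (∃! r, r ∈ G.verts ∧ subIn G A r = 0) ∧
    (∀ r ∈ G.verts, subIn G A r = 0 → subOut G A r = 1) ∧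
    (∀ v ∈ G.verts,
        (subIn G A v = 0 ∧ subOut G A v = 1) ∨ (subIn G A v = 1 ∧ subOut G A v = 0) ∨
        (subIn G A v = 1 ∧ subOut G A v = 1) ∨ (subIn G A v = 1 ∧ subOut G A v = 2)) ∧
    (∀ v ∈ G.verts, subIn G A v = 1 → subOut G A v = 0 → IsLeafN G v) ∧
    (∀ v, IsLeafN G v → subIn G A v = 1 ∧ subOut G A v = 0) ∧
    (∀ a ∈ G.arcs, a ∉ A →
        subIn G A (G.src a) = 1 ∧ subOut G A (G.src a) = 1 ∧
        subIn G A (G.tgt a) = 1 ∧ subOut G A (G.tgt a) = 1) ∧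
    (∀ v ∈ G.verts, subIn G A v = 1 → subOut G A v = 1 → inDeg G v + outDeg G v = 3)

/-- `G` is tree-child (reticulation vertices contained in beads being ignored):
every vertex has a directed path to a leaf on which every vertex except possibly
the first one is either not a reticulation vertex or is contained in a bead. -/
def IsTreeChild (G : Net) : Prop :=
  ∀ v ∈ G.verts, ∃ (l : List ℕ) (w : ℕ), IsWalk G l v w ∧ IsLeafN G w ∧
    ∀ a ∈ l, IsReticN G (G.tgt a) → InBead G (G.tgt a)

/-! ### Multiple-labelled networks and the split operation -/

/-- A multiple-labelled network: a network together with a labelling map assigning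
to each leaf vertex the (0-based) position of the profile component it is labelled
with; distinct leaves may carry the same label. -/
structure MLNet where
  net : Net
  lab : ℕ → ℕ

/-- A multiple-labelled tree: a multiple-labelled network without reticulation
vertices. -/
def IsMLTree (R : MLNet) : Prop := ∀ v, ¬ IsReticN R.net v

/-- The multiple-labelled network `R` realizes the ploidy profile `m`: for every
position `i` of `m`, the total number of directed paths from the root to leaves
labelled `i` equals the `i`-th component of `m`. -/
def MLRealizes (R : MLNet) (m : List ℕ) : Prop :=
  IsPhylo R.net ∧
  (∀ v, IsLeafN R.net v → R.lab v < m.length) ∧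
  (∀ i < m.length, ∀ r, IsRootN R.net r →
      (∑ v ∈ R.net.verts.filter (fun v => IsLeafN R.net v ∧ R.lab v = i),
          nPaths R.net r v) = m.getD i 0)

/-- The arcs of the subgraph induced by the vertices below `c`. -/
def arcsBelow (G : Net) (c : ℕ) : Set ℕ :=
  {b | b ∈ G.arcs ∧ BelowV G c (G.src b) ∧ BelowV G c (G.tgt b)}

/-- `a` is a cut-arc of `G`: removing it disconnects its end vertices in the
underlying undirected graph. -/
def IsCutArc (G : Net) (a : ℕ) : Prop :=
  a ∈ G.arcs ∧
    ¬ Relation.ReflTransGen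
        (fun x y => ∃ b ∈ G.arcs, b ≠ a ∧
          ((G.src b = x ∧ G.tgt b = y) ∨ (G.src b = y ∧ G.tgt b = x)))
        (G.src a) (G.tgt a)

/-- The split operation: `R'` is obtained from `R` by deleting a reticulation
vertex `h` (with parents `p₁, p₂` and child `c`, where `(h,c)` is a cut-arc)
together with its three incident arcs, making a disjoint copy (via `φ` on vertices
and `ψ` on arcs) of the subgraph induced by the vertices below `c`, and attaching
one copy of `c` to `p₁` by an arc `(p₁,c)` and the other to `p₂` by an arc
`(p₂,c)`. -/
def SplitRel (R R' : MLNet) : Prop :=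
  ∃ (h p1 p2 c a0 a1 a2 : ℕ) (φ ψ : ℕ → ℕ),
    IsReticN R.net h ∧
    ArcFT R.net a0 h c ∧ IsCutArc R.net a0 ∧
    ArcFT R.net a1 p1 h ∧ ArcFT R.net a2 p2 h ∧
    a1 ≠ a2 ∧ a0 ≠ a1 ∧ a0 ≠ a2 ∧
    Set.InjOn φ {w | BelowV R.net c w} ∧
    (∀ w, BelowV R.net c w → φ w ∉ R.net.verts) ∧
    Set.InjOn ψ (arcsBelow R.net c) ∧
    (∀ b ∈ arcsBelow R.net c, ψ b ∉ R.net.arcs) ∧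
    (↑R'.net.verts : Set ℕ) =
      ((↑R.net.verts : Set ℕ) \ {h}) ∪ (φ '' {w | BelowV R.net c w}) ∧
    (↑R'.net.arcs : Set ℕ) =
      ((↑R.net.arcs : Set ℕ) \ {a0}) ∪ (ψ '' arcsBelow R.net c) ∧
    (∀ b ∈ R.net.arcs, b ≠ a0 → b ≠ a1 → b ≠ a2 →
        R'.net.src b = R.net.src b ∧ R'.net.tgt b = R.net.tgt b) ∧
    R'.net.src a1 = p1 ∧ R'.net.tgt a1 = c ∧
    R'.net.src a2 = p2 ∧ R'.net.tgt a2 = φ c ∧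
    (∀ b ∈ arcsBelow R.net c,
        R'.net.src (ψ b) = φ (R.net.src b) ∧ R'.net.tgt (ψ b) = φ (R.net.tgt b)) ∧
    (∀ v ∈ R.net.verts, v ≠ h → R'.lab v = R.lab v) ∧
    (∀ w, BelowV R.net c w → R'.lab (φ w) = R.lab w)

/-- Adjacency in ploidy profile space `𝒫(m)` (relative to an edit distance `D` on
multiple-labelled trees): both endpoints realize `m` and either one is obtained
from the other by a single split operation, or both are multiple-labelled trees at
`D`-distance 1. -/
def PEdge (m : List ℕ) (D : MLNet → MLNet → ℕ) (A B : MLNet) : Prop :=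
  MLRealizes A m ∧ MLRealizes B m ∧
    (SplitRel A B ∨ SplitRel B A ∨ (IsMLTree A ∧ IsMLTree B ∧ D A B = 1))

/-!
Splitting a reticulation `h` whose child `c` has no reticulation below it preserves the
realized profile: a root path to a vertex below `c` passes through the arc `(h, c)` and through
exactly one of the two arcs entering `h`, so it survives as a root path to exactly one of the two
copies of that vertex. Each split removes a reticulation, hence every realization of `m` is joined
by split edges, which can be traversed in both directions, to a multiple-labelled tree; the trees
are connected among themselves by hypothesis.
-/

section Walks

variable {G : Net}

lemma isWalk_cons_iff {a : ℕ} {l : List ℕ} {u v : ℕ} :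
    IsWalk G (a :: l) u v ↔ a ∈ G.arcs ∧ G.src a = u ∧ IsWalk G l (G.tgt a) v := Iff.rfl

lemma IsWalk.end_mem : ∀ {l : List ℕ} {u v : ℕ}, IsWalk G l u v → v ∈ G.verts
  | [], _, _, h => h.1 ▸ h.2
  | _ :: _, _, _, h => IsWalk.end_mem h.2.2

lemma IsWalk.start_mem (hsrc : ∀ a ∈ G.arcs, G.src a ∈ G.verts) :
    ∀ {l : List ℕ} {u v : ℕ}, IsWalk G l u v → u ∈ G.verts
  | [], _, _, h => h.1 ▸ h.2
  | _ :: _, _, _, h => h.2.1 ▸ hsrc _ h.1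

lemma IsWalk.append : ∀ {l₁ l₂ : List ℕ} {u v w : ℕ},
    IsWalk G l₁ u v → IsWalk G l₂ v w → IsWalk G (l₁ ++ l₂) u w
  | [], l₂, u, v, w, h₁, h₂ => by
      obtain ⟨rfl, -⟩ := h₁; simpa using h₂
  | a :: l₁, l₂, u, v, w, h₁, h₂ =>
      ⟨h₁.1, h₁.2.1, IsWalk.append h₁.2.2 h₂⟩

lemma isWalk_append_iff (hsrc : ∀ a ∈ G.arcs, G.src a ∈ G.verts) :
    ∀ {l₁ l₂ : List ℕ} {u w : ℕ},
    IsWalk G (l₁ ++ l₂) u w ↔ ∃ v, IsWalk G l₁ u v ∧ IsWalk G l₂ v w := by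
  intro l₁
  induction l₁ with
  | nil =>
      intro l₂ u w
      constructor
      · intro h
        exact ⟨u, ⟨rfl, h.start_mem hsrc⟩, h⟩
      · rintro ⟨v, ⟨rfl, -⟩, h⟩; exact h
  | cons a l₁ ih =>
      intro l₂ u w
      simp only [List.cons_append, isWalk_cons_iff, ih]
      constructor
      · rintro ⟨h1, h2, v, h3, h4⟩; exact ⟨v, ⟨h1, h2, h3⟩, h4⟩
      · rintro ⟨v, ⟨h1, h2, h3⟩, h4⟩; exact ⟨h1, h2, v, h3, h4⟩

lemma IsWalk.arc_mem : ∀ {l : List ℕ} {u v : ℕ}, IsWalk G l u v → ∀ a ∈ l, a ∈ G.arcs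
  | [], _, _, _, a, ha => by simp at ha
  | b :: l, _, _, h, a, ha => by
      rcases List.mem_cons.1 ha with rfl | ha
      · exact h.1
      · exact IsWalk.arc_mem h.2.2 a ha

lemma IsWalk.nodup (hsrc : ∀ a ∈ G.arcs, G.src a ∈ G.verts)
    (htgt : ∀ a ∈ G.arcs, G.tgt a ∈ G.verts)
    (hacyc : ∀ (v : ℕ) (l : List ℕ), l ≠ [] → ¬ IsWalk G l v v) :
    ∀ {l : List ℕ} {u v : ℕ}, IsWalk G l u v → l.Nodup := by
  intro l
  induction l with
  | nil => intro u v _; exact List.nodup_nil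
  | cons a l ih =>
      intro u v h
      refine List.nodup_cons.2 ⟨?_, ih h.2.2⟩
      intro hal
      obtain ⟨s, t, rfl⟩ := List.append_of_mem hal
      obtain ⟨w, hw1, hw2⟩ := (isWalk_append_iff hsrc).1 h.2.2
      have hw3 : G.src a = w := hw2.2.1
      have : IsWalk G (s ++ [a]) (G.tgt a) (G.tgt a) :=
        hw1.append (by exact ⟨h.1, hw3.symm ▸ rfl, rfl, htgt a h.1⟩)
      exact hacyc _ _ (by simp) this

lemma finite_setOf_isWalk (hsrc : ∀ a ∈ G.arcs, G.src a ∈ G.verts)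
    (htgt : ∀ a ∈ G.arcs, G.tgt a ∈ G.verts)
    (hacyc : ∀ (v : ℕ) (l : List ℕ), l ≠ [] → ¬ IsWalk G l v v) (u v : ℕ) :
    {l : List ℕ | IsWalk G l u v}.Finite := by
  classical
  have hbig : {l : List ℕ | IsWalk G l u v} ⊆
      (List.map (Subtype.val : {x // x ∈ G.arcs} → ℕ)) ''
        {L : List {x // x ∈ G.arcs} | L.length ≤ G.arcs.card} := by
    intro l hl
    have hmem : ∀ a ∈ l, a ∈ G.arcs := hl.arc_mem
    have hnd : l.Nodup := hl.nodup hsrc htgt hacyc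
    have hlen : l.length ≤ G.arcs.card := by
      have h1 : l.toFinset ⊆ G.arcs := fun a ha => hmem a (List.mem_toFinset.1 ha)
      have h2 := Finset.card_le_card h1
      rwa [List.toFinset_card_of_nodup hnd] at h2
    refine ⟨l.pmap (fun a h => (⟨a, h⟩ : {x // x ∈ G.arcs})) hmem, ?_, ?_⟩
    · simpa [List.length_pmap] using hlen
    · simp [List.map_pmap]
  exact Set.Finite.subset (Set.Finite.image _ (List.finite_length_le _ _)) hbig

lemma IsWalk.eq_or_exists_last_arc (hsrc : ∀ a ∈ G.arcs, G.src a ∈ G.verts) {l : List ℕ}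
    {u v : ℕ} (hl : IsWalk G l u v) :
    u = v ∨
      ∃ l' a, l = l' ++ [a] ∧ a ∈ G.arcs ∧ G.tgt a = v ∧ IsWalk G l' u (G.src a) := by
  rcases List.eq_nil_or_concat l with rfl | ⟨l', a, rfl⟩
  · exact Or.inl hl.1
  · rw [List.concat_eq_append] at hl ⊢
    obtain ⟨x, hx, ha, rfl, hav⟩ := (isWalk_append_iff hsrc).1 hl
    exact Or.inr ⟨l', a, rfl, ha, hav.1, hx⟩

lemma IsWalk.belowV_tgt_of_mem (hsrc : ∀ a ∈ G.arcs, G.src a ∈ G.verts) {l : List ℕ}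
    {u v a : ℕ} (hl : IsWalk G l u v) (ha : a ∈ l) : BelowV G (G.tgt a) v := by
  obtain ⟨s, s', rfl⟩ := List.append_of_mem ha
  obtain ⟨x, -, -, -, hs'⟩ := (isWalk_append_iff hsrc).1 hl
  exact ⟨s', hs'⟩

end Walks

section Degrees

variable {G : Net}

lemma inDeg_pos_of_mem_arcs {a : ℕ} (ha : a ∈ G.arcs) : 0 < inDeg G (G.tgt a) :=
  Finset.card_pos.2 ⟨a, Finset.mem_filter.2 ⟨ha, rfl⟩⟩

lemma exists_out_arc_of_outDeg_eq_one {v : ℕ} (hv : outDeg G v = 1) :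
    ∃ a ∈ G.arcs, G.src a = v ∧ ∀ e ∈ G.arcs, G.src e = v → e = a := by
  obtain ⟨a, ha⟩ := Finset.card_eq_one.1 hv
  have hmem : ∀ e, e ∈ G.arcs ∧ G.src e = v ↔ e = a := fun e => by
    simpa using Finset.ext_iff.1 ha e
  obtain ⟨haG, hsa⟩ := (hmem a).2 rfl
  exact ⟨a, haG, hsa, fun e he hse => (hmem e).1 ⟨he, hse⟩⟩

lemma exists_in_arcs_of_inDeg_eq_two {v : ℕ} (hv : inDeg G v = 2) :
    ∃ a₁ a₂, a₁ ≠ a₂ ∧ a₁ ∈ G.arcs ∧ a₂ ∈ G.arcs ∧ G.tgt a₁ = v ∧ G.tgt a₂ = v ∧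
      ∀ e ∈ G.arcs, G.tgt e = v → e = a₁ ∨ e = a₂ := by
  obtain ⟨a₁, a₂, hne, ha⟩ := Finset.card_eq_two.1 hv
  have hmem : ∀ e, e ∈ G.arcs ∧ G.tgt e = v ↔ e = a₁ ∨ e = a₂ := fun e => by
    simpa using Finset.ext_iff.1 ha e
  obtain ⟨ha₁, ht₁⟩ := (hmem a₁).2 (Or.inl rfl)
  obtain ⟨ha₂, ht₂⟩ := (hmem a₂).2 (Or.inr rfl)
  exact ⟨a₁, a₂, hne, ha₁, ha₂, ht₁, ht₂, fun e he hte => (hmem e).1 ⟨he, hte⟩⟩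

lemma vertexType_of_deg_eq {G' : Net} {v w : ℕ} (hv : v ∈ G'.verts)
    (hin : inDeg G' v = inDeg G w) (hout : outDeg G' v = outDeg G w)
    (hw : IsRootN G w ∨ IsLeafN G w ∨ IsTreeVert G w ∨ IsReticN G w) :
    IsRootN G' v ∨ IsLeafN G' v ∨ IsTreeVert G' v ∨ IsReticN G' v := by
  simp only [IsRootN, IsLeafN, IsTreeVert, IsReticN, hin, hout] at hw ⊢
  tauto

end Degrees

section Lists

variable {α : Type*} {a : α}

lemma _root_.List.exists_eq_append_cons_not_mem :
    ∀ {l : List α}, a ∈ l → ∃ t d, l = t ++ a :: d ∧ a ∉ t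
  | b :: l, h => by
      by_cases hb : b = a
      · exact ⟨[], l, by simp [hb], List.not_mem_nil⟩
      · obtain ⟨t, d, rfl, hat⟩ := List.exists_eq_append_cons_not_mem
          ((List.mem_cons.1 h).resolve_left (Ne.symm hb))
        exact ⟨b :: t, d, rfl, by simp [Ne.symm hb, hat]⟩

lemma _root_.List.takeWhile_dropWhile_append_cons_of_not_mem [BEq α] [LawfulBEq α] :
    ∀ {t : List α} (d : List α), a ∉ t →
    (t ++ a :: d).takeWhile (· != a) = t ∧ (t ++ a :: d).dropWhile (· != a) = a :: d
  | [], d, _ => by simp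
  | b :: t, d, hat => by
      have hba : (b != a) = true := bne_iff_ne.2 fun h => hat (h ▸ List.mem_cons_self)
      obtain ⟨ht, hd⟩ := List.takeWhile_dropWhile_append_cons_of_not_mem d
        fun h => hat (List.mem_cons_of_mem _ h)
      simp [hba, ht, hd]

lemma _root_.List.append_cons_inj_of_not_mem [BEq α] [LawfulBEq α] {t t' d d' : List α}
    (heq : t ++ a :: d = t' ++ a :: d') (ht : a ∉ t) (ht' : a ∉ t') : t = t' ∧ d = d' := by
  obtain ⟨h₁, h₂⟩ := List.takeWhile_dropWhile_append_cons_of_not_mem d ht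
  obtain ⟨h₁', h₂'⟩ := List.takeWhile_dropWhile_append_cons_of_not_mem d' ht'
  rw [heq] at h₁ h₂
  exact ⟨h₁.symm.trans h₁', List.cons_injective (h₂.symm.trans h₂')⟩

end Lists

section SplitConstruction

attribute [local instance 10] Classical.propDecidable

noncomputable def reticulations (G : Net) : Finset ℕ := G.verts.filter (IsReticN G)

lemma exists_isReticN_forall_below_not_isReticN {G : Net}
    (hacyc : ∀ (v : ℕ) (l : List ℕ), l ≠ [] → ¬ IsWalk G l v v) {v : ℕ} (hv : IsReticN G v) :
    ∃ h, IsReticN G h ∧ ∀ w, BelowV G h w → w ≠ h → ¬ IsReticN G w := by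
  -- a reticulation with the fewest descendants
  obtain ⟨h, hh, hmin⟩ := (reticulations G).exists_min_image
    (fun w => (G.verts.filter (BelowV G w)).card) ⟨v, Finset.mem_filter.2 ⟨hv.1, hv⟩⟩
  obtain ⟨hhV, hhR⟩ := Finset.mem_filter.1 hh
  refine ⟨h, hhR, fun w ⟨l₁, hl₁⟩ hwh hw => ?_⟩
  have hsub : G.verts.filter (BelowV G w) ⊂ G.verts.filter (BelowV G h) := by
    refine (Finset.ssubset_iff_of_subset fun x hx => ?_).2 ⟨h, ?_, ?_⟩
    · obtain ⟨hx, l₂, hl₂⟩ := Finset.mem_filter.1 hx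
      exact Finset.mem_filter.2 ⟨hx, l₁ ++ l₂, hl₁.append hl₂⟩
    · exact Finset.mem_filter.2 ⟨hhV, [], rfl, hhV⟩
    · intro hmem
      obtain ⟨-, l₂, hl₂⟩ := Finset.mem_filter.1 hmem
      have hl₁ne : l₁ ≠ [] := by rintro rfl; exact hwh hl₁.1.symm
      exact hacyc h (l₁ ++ l₂) (by simp [hl₁ne]) (hl₁.append hl₂)
  exact (hmin w (Finset.mem_filter.2 ⟨hw.1, hw⟩)).not_gt (Finset.card_lt_card hsub)

-- Having no reticulation below the child `c = G.tgt a0` of `h` makes `(h, c)` a cut-arc and gives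
-- every vertex below `c` a single parent.
structure SplitSite where
  G : Net
  isPhylo : IsPhylo G
  h : ℕ
  a0 : ℕ
  a1 : ℕ
  a2 : ℕ
  r : ℕ
  isReticN_h : IsReticN G h
  a0_mem : a0 ∈ G.arcs
  src_a0 : G.src a0 = h
  eq_a0_of_src_eq_h : ∀ e ∈ G.arcs, G.src e = h → e = a0
  a1_mem : a1 ∈ G.arcs
  a2_mem : a2 ∈ G.arcs
  tgt_a1 : G.tgt a1 = h
  tgt_a2 : G.tgt a2 = h
  a1_ne_a2 : a1 ≠ a2
  eq_a1_or_a2_of_tgt_eq_h : ∀ e ∈ G.arcs, G.tgt e = h → e = a1 ∨ e = a2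
  not_isReticN_below : ∀ w, BelowV G (G.tgt a0) w → ¬ IsReticN G w
  isRootN_r : IsRootN G r
  eq_r_of_isRootN : ∀ x, IsRootN G x → x = r

namespace SplitSite

variable (C : SplitSite)

def c : ℕ := C.G.tgt C.a0
def p1 : ℕ := C.G.src C.a1
def p2 : ℕ := C.G.src C.a2
def below : Set ℕ := {w | BelowV C.G C.c w}
-- Copies are named by shifting past the largest vertex (arc) name, so they are fresh.
def vertShift : ℕ := C.G.verts.sup id + 1
def arcShift : ℕ := C.G.arcs.sup id + 1
def copyV (w : ℕ) : ℕ := w + C.vertShift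
def copyA (b : ℕ) : ℕ := b + C.arcShift

noncomputable def belowFinset : Finset ℕ :=
  C.G.verts.filter (fun w => BelowV C.G C.c w)

noncomputable def arcsBelowFinset : Finset ℕ :=
  C.G.arcs.filter (fun b => BelowV C.G C.c (C.G.src b) ∧ BelowV C.G C.c (C.G.tgt b))

variable {C}

lemma c_mem_verts : C.c ∈ C.G.verts := C.isPhylo.tgt_mem _ C.a0_mem
lemma p1_mem_verts : C.p1 ∈ C.G.verts := C.isPhylo.src_mem _ C.a1_mem
lemma p2_mem_verts : C.p2 ∈ C.G.verts := C.isPhylo.src_mem _ C.a2_mem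
lemma h_mem_verts : C.h ∈ C.G.verts := C.isReticN_h.1

lemma c_mem_below : C.c ∈ C.below := ⟨[], rfl, c_mem_verts⟩

lemma mem_verts_of_mem_below {w : ℕ} (hw : w ∈ C.below) : w ∈ C.G.verts := by
  obtain ⟨l, hl⟩ := hw; exact hl.end_mem

lemma mem_below_of_isWalk {w x : ℕ} (hw : w ∈ C.below) {l : List ℕ} (hl : IsWalk C.G l w x) :
    x ∈ C.below := by
  obtain ⟨l0, hl0⟩ := hw; exact ⟨l0 ++ l, hl0.append hl⟩

lemma h_not_mem_below : C.h ∉ C.below := by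
  rintro ⟨l, hl⟩
  exact C.isPhylo.acyclic C.h (C.a0 :: l) (by simp) ⟨C.a0_mem, C.src_a0, hl⟩

lemma h_ne_c : C.h ≠ C.c := fun h => h_not_mem_below (h ▸ c_mem_below)

lemma mem_belowFinset_iff {w : ℕ} : w ∈ C.belowFinset ↔ w ∈ C.below := by
  unfold belowFinset
  rw [Finset.mem_filter]
  exact ⟨fun h => h.2, fun h => ⟨mem_verts_of_mem_below h, h⟩⟩

lemma mem_arcsBelowFinset_iff {b : ℕ} :
    b ∈ C.arcsBelowFinset ↔ b ∈ C.G.arcs ∧ C.G.src b ∈ C.below ∧ C.G.tgt b ∈ C.below := by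
  unfold arcsBelowFinset
  rw [Finset.mem_filter]
  exact Iff.rfl

lemma isWalk_singleton {b : ℕ} (hb : b ∈ C.G.arcs) : IsWalk C.G [b] (C.G.src b) (C.G.tgt b) :=
  ⟨hb, rfl, rfl, C.isPhylo.tgt_mem _ hb⟩

lemma tgt_mem_below {b : ℕ} (hb : b ∈ C.G.arcs) (hs : C.G.src b ∈ C.below) :
    C.G.tgt b ∈ C.below :=
  mem_below_of_isWalk hs (isWalk_singleton hb)

lemma inDeg_of_mem_below {w : ℕ} (hw : w ∈ C.below) : inDeg C.G w = 1 := by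
  have hpos : 0 < inDeg C.G w := by
    obtain ⟨l, hl⟩ := hw
    rcases hl.eq_or_exists_last_arc C.isPhylo.src_mem with rfl | ⟨-, a, -, ha, rfl, -⟩
    · exact inDeg_pos_of_mem_arcs C.a0_mem
    · exact inDeg_pos_of_mem_arcs ha
  rcases C.isPhylo.types w (mem_verts_of_mem_below hw) with hr | hl | ht | hret
  · have := hr.2; omega
  · exact hl.2.1
  · exact ht.2.1
  · exact absurd hret (C.not_isReticN_below _ hw)

lemma arc_unique_of_tgt_mem_below {w b e : ℕ} (hw : w ∈ C.below) (hb : b ∈ C.G.arcs)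
    (htb : C.G.tgt b = w) (he : e ∈ C.G.arcs) (hte : C.G.tgt e = w) : b = e :=
  Finset.card_le_one.1 (inDeg_of_mem_below hw).le _ (Finset.mem_filter.2 ⟨hb, htb⟩) _
    (Finset.mem_filter.2 ⟨he, hte⟩)

lemma eq_a0_of_tgt_c {b : ℕ} (hb : b ∈ C.G.arcs) (htb : C.G.tgt b = C.c) : b = C.a0 :=
  arc_unique_of_tgt_mem_below c_mem_below hb htb C.a0_mem rfl

lemma src_mem_below_or_eq_a0 {b : ℕ} (hb : b ∈ C.G.arcs) (ht : C.G.tgt b ∈ C.below) :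
    C.G.src b ∈ C.below ∨ b = C.a0 := by
  obtain ⟨l, hl⟩ := ht
  rcases hl.eq_or_exists_last_arc C.isPhylo.src_mem with hc | ⟨l', e, -, he, hte, hl'⟩
  · exact Or.inr (eq_a0_of_tgt_c hb hc.symm)
  · left
    rw [arc_unique_of_tgt_mem_below ⟨l, hl⟩ hb rfl he hte]
    exact ⟨l', hl'⟩

lemma p1_not_mem_below : C.p1 ∉ C.below := by
  intro hp
  exact h_not_mem_below (C.tgt_a1 ▸ tgt_mem_below C.a1_mem hp)

lemma p2_not_mem_below : C.p2 ∉ C.below := by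
  intro hp
  exact h_not_mem_below (C.tgt_a2 ▸ tgt_mem_below C.a2_mem hp)

lemma r_not_mem_below : C.r ∉ C.below := by
  intro hr
  have h1 : inDeg C.G C.r = 1 := inDeg_of_mem_below hr
  have h0 : inDeg C.G C.r = 0 := C.isRootN_r.2
  omega

lemma r_ne_h : C.r ≠ C.h := by
  intro h
  have h2 : inDeg C.G C.h = 2 := C.isReticN_h.2.1
  have h0 : inDeg C.G C.r = 0 := C.isRootN_r.2
  rw [h] at h0; omega

lemma a0_ne_a1 : C.a0 ≠ C.a1 := by
  intro h
  exact C.isPhylo.no_loop _ C.a0_mem (by rw [C.src_a0, h, C.tgt_a1])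

lemma a0_ne_a2 : C.a0 ≠ C.a2 := by
  intro h
  exact C.isPhylo.no_loop _ C.a0_mem (by rw [C.src_a0, h, C.tgt_a2])

lemma p1_ne_h : C.p1 ≠ C.h := fun h => C.isPhylo.no_loop _ C.a1_mem (by rw [C.tgt_a1]; exact h)

lemma p2_ne_h : C.p2 ≠ C.h := fun h => C.isPhylo.no_loop _ C.a2_mem (by rw [C.tgt_a2]; exact h)

lemma p1_ne_c : C.p1 ≠ C.c := by
  intro h
  refine C.isPhylo.acyclic C.c [C.a1, C.a0] (by simp) ?_
  exact ⟨C.a1_mem, h ▸ rfl, C.a0_mem, by rw [C.tgt_a1, C.src_a0], rfl, c_mem_verts⟩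

lemma a0_not_mem_arcsBelowFinset : C.a0 ∉ C.arcsBelowFinset := by
  rw [mem_arcsBelowFinset_iff]
  rintro ⟨-, hs, -⟩
  exact h_not_mem_below (C.src_a0 ▸ hs)

lemma copyV_not_mem (w : ℕ) : C.copyV w ∉ C.G.verts := by
  intro hmem
  have := Finset.le_sup (f := id) hmem
  simp only [id_eq] at this
  unfold copyV vertShift at *
  omega

lemma copyA_not_mem (b : ℕ) : C.copyA b ∉ C.G.arcs := by
  intro hmem
  have := Finset.le_sup (f := id) hmem
  simp only [id_eq] at this
  unfold copyA arcShift at *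
  omega

lemma copyV_injective : Function.Injective C.copyV := fun a b h => by unfold copyV at h; omega

lemma copyA_injective : Function.Injective C.copyA := fun a b h => by unfold copyA at h; omega

lemma copyV_sub (w : ℕ) : C.copyV w - C.vertShift = w := by unfold copyV; omega

lemma copyA_sub (b : ℕ) : C.copyA b - C.arcShift = b := by unfold copyA; omega

-- The arcs `a1, a2` are reused as the new arcs `(p1, c)` and `(p2, copyV c)`.
variable (C) in
noncomputable def splitNet : Net where
  verts := (C.G.verts.erase C.h) ∪ C.belowFinset.image C.copyV
  arcs := (C.G.arcs.erase C.a0) ∪ C.arcsBelowFinset.image C.copyA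
  src e :=
    if e ∈ C.arcsBelowFinset.image C.copyA then C.copyV (C.G.src (e - C.arcShift)) else C.G.src e
  tgt e :=
    if e = C.a1 then C.c
    else if e = C.a2 then C.copyV C.c
    else if e ∈ C.arcsBelowFinset.image C.copyA then C.copyV (C.G.tgt (e - C.arcShift))
    else C.G.tgt e

lemma not_mem_image_copyA {e : ℕ} (he : e ∈ C.G.arcs) : e ∉ C.arcsBelowFinset.image C.copyA := by
  intro hmem
  obtain ⟨b, -, hb⟩ := Finset.mem_image.1 hmem
  exact copyA_not_mem b (hb ▸ he)

lemma not_mem_image_copyV {v : ℕ} (hv : v ∈ C.G.verts) : v ∉ C.belowFinset.image C.copyV := by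
  intro hmem
  obtain ⟨w, -, hw⟩ := Finset.mem_image.1 hmem
  exact copyV_not_mem w (hw ▸ hv)

lemma splitNet_src_old {e : ℕ} (he : e ∈ C.G.arcs) : C.splitNet.src e = C.G.src e := by
  unfold splitNet
  simp only [not_mem_image_copyA he, if_false]

lemma splitNet_tgt_old {e : ℕ} (he : e ∈ C.G.arcs) (h1 : e ≠ C.a1) (h2 : e ≠ C.a2) :
    C.splitNet.tgt e = C.G.tgt e := by
  unfold splitNet
  simp only [h1, h2, not_mem_image_copyA he, if_false]

lemma splitNet_tgt_a1 : C.splitNet.tgt C.a1 = C.c := by unfold splitNet; simp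

lemma splitNet_tgt_a2 : C.splitNet.tgt C.a2 = C.copyV C.c := by
  unfold splitNet
  simp only [Ne.symm C.a1_ne_a2, if_false, if_true]

lemma splitNet_src_a1 : C.splitNet.src C.a1 = C.p1 := splitNet_src_old C.a1_mem
lemma splitNet_src_a2 : C.splitNet.src C.a2 = C.p2 := splitNet_src_old C.a2_mem

lemma splitNet_src_copyA {b : ℕ} (hb : b ∈ C.arcsBelowFinset) :
    C.splitNet.src (C.copyA b) = C.copyV (C.G.src b) := by
  unfold splitNet
  simp only [Finset.mem_image.2 ⟨b, hb, rfl⟩, if_true, copyA_sub]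

lemma copyA_ne_a1 (b : ℕ) : C.copyA b ≠ C.a1 := fun h => copyA_not_mem b (h ▸ C.a1_mem)
lemma copyA_ne_a2 (b : ℕ) : C.copyA b ≠ C.a2 := fun h => copyA_not_mem b (h ▸ C.a2_mem)
lemma copyA_ne_a0 (b : ℕ) : C.copyA b ≠ C.a0 := fun h => copyA_not_mem b (h ▸ C.a0_mem)

lemma splitNet_tgt_copyA {b : ℕ} (hb : b ∈ C.arcsBelowFinset) :
    C.splitNet.tgt (C.copyA b) = C.copyV (C.G.tgt b) := by
  unfold splitNet
  simp only [copyA_ne_a1 b, copyA_ne_a2 b, if_false, Finset.mem_image.2 ⟨b, hb, rfl⟩, if_true,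
    copyA_sub]

lemma mem_splitNet_verts_iff {x : ℕ} : x ∈ C.splitNet.verts ↔
    (x ∈ C.G.verts ∧ x ≠ C.h) ∨ ∃ w ∈ C.below, C.copyV w = x := by
  unfold splitNet
  simp only [Finset.mem_union, Finset.mem_erase, Finset.mem_image, mem_belowFinset_iff]
  tauto

lemma mem_splitNet_arcs_iff {e : ℕ} : e ∈ C.splitNet.arcs ↔
    (e ∈ C.G.arcs ∧ e ≠ C.a0) ∨ ∃ b ∈ C.arcsBelowFinset, C.copyA b = e := by
  unfold splitNet
  simp only [Finset.mem_union, Finset.mem_erase, Finset.mem_image]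
  tauto

lemma mem_splitNet_verts_of_mem {x : ℕ} (hx : x ∈ C.G.verts) (hne : x ≠ C.h) :
    x ∈ C.splitNet.verts :=
  mem_splitNet_verts_iff.2 (Or.inl ⟨hx, hne⟩)

lemma copyV_mem_splitNet_verts {w : ℕ} (hw : w ∈ C.below) : C.copyV w ∈ C.splitNet.verts :=
  mem_splitNet_verts_iff.2 (Or.inr ⟨w, hw, rfl⟩)

lemma mem_splitNet_arcs_of_mem {e : ℕ} (he : e ∈ C.G.arcs) (hne : e ≠ C.a0) :
    e ∈ C.splitNet.arcs :=
  mem_splitNet_arcs_iff.2 (Or.inl ⟨he, hne⟩)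

lemma copyA_mem_splitNet_arcs {b : ℕ} (hb : b ∈ C.arcsBelowFinset) :
    C.copyA b ∈ C.splitNet.arcs :=
  mem_splitNet_arcs_iff.2 (Or.inr ⟨b, hb, rfl⟩)

lemma a1_mem_splitNet_arcs : C.a1 ∈ C.splitNet.arcs :=
  mem_splitNet_arcs_of_mem C.a1_mem a0_ne_a1.symm

lemma a2_mem_splitNet_arcs : C.a2 ∈ C.splitNet.arcs :=
  mem_splitNet_arcs_of_mem C.a2_mem a0_ne_a2.symm

lemma a0_not_mem_splitNet_arcs : C.a0 ∉ C.splitNet.arcs := by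
  rw [mem_splitNet_arcs_iff]
  rintro (⟨-, h⟩ | ⟨b, -, h⟩)
  · exact h rfl
  · exact copyA_ne_a0 b h

lemma c_mem_splitNet_verts : C.c ∈ C.splitNet.verts :=
  mem_splitNet_verts_of_mem c_mem_verts h_ne_c.symm

lemma splitNet_arcs_into_c :
    C.splitNet.arcs.filter (fun e => C.splitNet.tgt e = C.c) = {C.a1} := by
  ext e
  simp only [Finset.mem_filter, Finset.mem_singleton]
  constructor
  · rintro ⟨he, hte⟩
    rcases mem_splitNet_arcs_iff.1 he with ⟨heG, hne0⟩ | ⟨b, hb, rfl⟩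
    · by_cases h1 : e = C.a1
      · exact h1
      · by_cases h2 : e = C.a2
        · rw [h2, splitNet_tgt_a2] at hte
          exact absurd (hte ▸ copyV_not_mem C.c) (fun hn => hn c_mem_verts)
        · rw [splitNet_tgt_old heG h1 h2] at hte
          exact absurd (eq_a0_of_tgt_c heG hte) hne0
    · rw [splitNet_tgt_copyA hb] at hte
      exact absurd (hte ▸ copyV_not_mem (C.G.tgt b)) (fun hn => hn c_mem_verts)
  · rintro rfl
    exact ⟨a1_mem_splitNet_arcs, splitNet_tgt_a1⟩

lemma splitNet_arcs_into_old {v : ℕ} (hv : v ∈ C.G.verts) (hneh : v ≠ C.h) (hnec : v ≠ C.c) :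
    C.splitNet.arcs.filter (fun e => C.splitNet.tgt e = v) =
      C.G.arcs.filter (fun e => C.G.tgt e = v) := by
  ext e
  simp only [Finset.mem_filter]
  constructor
  · rintro ⟨he, hte⟩
    rcases mem_splitNet_arcs_iff.1 he with ⟨heG, hne0⟩ | ⟨b, hb, rfl⟩
    · by_cases h1 : e = C.a1
      · rw [h1, splitNet_tgt_a1] at hte; exact absurd hte.symm hnec
      · by_cases h2 : e = C.a2
        · rw [h2, splitNet_tgt_a2] at hte
          exact absurd (hte ▸ copyV_not_mem C.c) (fun hn => hn hv)
        · rw [splitNet_tgt_old heG h1 h2] at hte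
          exact ⟨heG, hte⟩
    · rw [splitNet_tgt_copyA hb] at hte
      exact absurd (hte ▸ copyV_not_mem (C.G.tgt b)) (fun hn => hn hv)
  · rintro ⟨heG, hte⟩
    have h0 : e ≠ C.a0 := fun h => hnec (by rw [← hte, h]; rfl)
    have h1 : e ≠ C.a1 := fun h => hneh (by rw [← hte, h, C.tgt_a1])
    have h2 : e ≠ C.a2 := fun h => hneh (by rw [← hte, h, C.tgt_a2])
    exact ⟨mem_splitNet_arcs_of_mem heG h0, by rw [splitNet_tgt_old heG h1 h2]; exact hte⟩

lemma splitNet_arcs_out_of_old {v : ℕ} (hv : v ∈ C.G.verts) (hneh : v ≠ C.h) :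
    C.splitNet.arcs.filter (fun e => C.splitNet.src e = v) =
      C.G.arcs.filter (fun e => C.G.src e = v) := by
  ext e
  simp only [Finset.mem_filter]
  constructor
  · rintro ⟨he, hse⟩
    rcases mem_splitNet_arcs_iff.1 he with ⟨heG, hne0⟩ | ⟨b, hb, rfl⟩
    · rw [splitNet_src_old heG] at hse
      exact ⟨heG, hse⟩
    · rw [splitNet_src_copyA hb] at hse
      exact absurd (hse ▸ copyV_not_mem (C.G.src b)) (fun hn => hn hv)
  · rintro ⟨heG, hse⟩
    have h0 : e ≠ C.a0 := fun h => hneh (by rw [← hse, h, C.src_a0])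
    exact ⟨mem_splitNet_arcs_of_mem heG h0, by rw [splitNet_src_old heG]; exact hse⟩

lemma splitNet_arcs_into_copy_c :
    C.splitNet.arcs.filter (fun e => C.splitNet.tgt e = C.copyV C.c) = {C.a2} := by
  ext e
  simp only [Finset.mem_filter, Finset.mem_singleton]
  constructor
  · rintro ⟨he, hte⟩
    rcases mem_splitNet_arcs_iff.1 he with ⟨heG, hne0⟩ | ⟨b, hb, rfl⟩
    · by_cases h1 : e = C.a1
      · rw [h1, splitNet_tgt_a1] at hte
        exact absurd (hte ▸ c_mem_verts) (copyV_not_mem C.c)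
      · by_cases h2 : e = C.a2
        · exact h2
        · rw [splitNet_tgt_old heG h1 h2] at hte
          exact absurd (hte ▸ C.isPhylo.tgt_mem e heG) (copyV_not_mem C.c)
    · rw [splitNet_tgt_copyA hb] at hte
      have : C.G.tgt b = C.c := copyV_injective hte
      have hb' := (mem_arcsBelowFinset_iff.1 hb).1
      exact absurd (eq_a0_of_tgt_c hb' this ▸ hb) a0_not_mem_arcsBelowFinset
  · rintro rfl
    exact ⟨a2_mem_splitNet_arcs, splitNet_tgt_a2⟩

lemma splitNet_arcs_into_copyV {w : ℕ} (hw : w ∈ C.below) (hnec : w ≠ C.c) :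
    C.splitNet.arcs.filter (fun e => C.splitNet.tgt e = C.copyV w) =
      (C.G.arcs.filter (fun e => C.G.tgt e = w)).image C.copyA := by
  ext e
  simp only [Finset.mem_filter, Finset.mem_image]
  constructor
  · rintro ⟨he, hte⟩
    rcases mem_splitNet_arcs_iff.1 he with ⟨heG, hne0⟩ | ⟨b, hb, rfl⟩
    · by_cases h1 : e = C.a1
      · rw [h1, splitNet_tgt_a1] at hte
        exact absurd (hte ▸ c_mem_verts) (copyV_not_mem w)
      · by_cases h2 : e = C.a2
        · rw [h2, splitNet_tgt_a2] at hte
          exact absurd (copyV_injective hte).symm hnec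
        · rw [splitNet_tgt_old heG h1 h2] at hte
          exact absurd (hte ▸ C.isPhylo.tgt_mem e heG) (copyV_not_mem w)
    · rw [splitNet_tgt_copyA hb] at hte
      exact ⟨b, ⟨(mem_arcsBelowFinset_iff.1 hb).1, copyV_injective hte⟩, rfl⟩
  · rintro ⟨b, ⟨hbG, htb⟩, rfl⟩
    have hb0 : b ≠ C.a0 := fun h => hnec (by rw [← htb, h]; rfl)
    have hsb : C.G.src b ∈ C.below := by
      rcases src_mem_below_or_eq_a0 hbG (htb ▸ hw) with h | h
      · exact h
      · exact absurd h hb0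
    have hb' : b ∈ C.arcsBelowFinset := mem_arcsBelowFinset_iff.2 ⟨hbG, hsb, htb ▸ hw⟩
    exact ⟨copyA_mem_splitNet_arcs hb', by rw [splitNet_tgt_copyA hb', htb]⟩

lemma splitNet_arcs_out_of_copyV {w : ℕ} (hw : w ∈ C.below) :
    C.splitNet.arcs.filter (fun e => C.splitNet.src e = C.copyV w) =
      (C.G.arcs.filter (fun e => C.G.src e = w)).image C.copyA := by
  ext e
  simp only [Finset.mem_filter, Finset.mem_image]
  constructor
  · rintro ⟨he, hse⟩
    rcases mem_splitNet_arcs_iff.1 he with ⟨heG, hne0⟩ | ⟨b, hb, rfl⟩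
    · rw [splitNet_src_old heG] at hse
      exact absurd (hse ▸ C.isPhylo.src_mem e heG) (copyV_not_mem w)
    · rw [splitNet_src_copyA hb] at hse
      exact ⟨b, ⟨(mem_arcsBelowFinset_iff.1 hb).1, copyV_injective hse⟩, rfl⟩
  · rintro ⟨b, ⟨hbG, hsb⟩, rfl⟩
    have hb' : b ∈ C.arcsBelowFinset :=
      mem_arcsBelowFinset_iff.2 ⟨hbG, hsb ▸ hw, tgt_mem_below hbG (hsb ▸ hw)⟩
    exact ⟨copyA_mem_splitNet_arcs hb', by rw [splitNet_src_copyA hb', hsb]⟩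

lemma inDeg_splitNet_old {v : ℕ} (hv : v ∈ C.G.verts) (hneh : v ≠ C.h) :
    inDeg C.splitNet v = inDeg C.G v := by
  by_cases hc : v = C.c
  · subst hc
    unfold inDeg
    rw [splitNet_arcs_into_c, Finset.card_singleton]
    exact (inDeg_of_mem_below c_mem_below).symm
  · unfold inDeg
    rw [splitNet_arcs_into_old hv hneh hc]

lemma outDeg_splitNet_old {v : ℕ} (hv : v ∈ C.G.verts) (hneh : v ≠ C.h) :
    outDeg C.splitNet v = outDeg C.G v := by
  unfold outDeg
  rw [splitNet_arcs_out_of_old hv hneh]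

lemma inDeg_splitNet_copyV {w : ℕ} (hw : w ∈ C.below) :
    inDeg C.splitNet (C.copyV w) = inDeg C.G w := by
  by_cases hc : w = C.c
  · subst hc
    unfold inDeg
    rw [splitNet_arcs_into_copy_c, Finset.card_singleton]
    exact (inDeg_of_mem_below c_mem_below).symm
  · unfold inDeg
    rw [splitNet_arcs_into_copyV hw hc, Finset.card_image_of_injective _ copyA_injective]

lemma outDeg_splitNet_copyV {w : ℕ} (hw : w ∈ C.below) :
    outDeg C.splitNet (C.copyV w) = outDeg C.G w := by
  unfold outDeg
  rw [splitNet_arcs_out_of_copyV hw, Finset.card_image_of_injective _ copyA_injective]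

lemma src_ne_h_of_old {e : ℕ} (he : e ∈ C.G.arcs) (hne0 : e ≠ C.a0) : C.G.src e ≠ C.h :=
  fun h => hne0 (C.eq_a0_of_src_eq_h e he h)

lemma tgt_ne_h_of_old {e : ℕ} (he : e ∈ C.G.arcs) (h1 : e ≠ C.a1) (h2 : e ≠ C.a2) :
    C.G.tgt e ≠ C.h := fun h => (C.eq_a1_or_a2_of_tgt_eq_h e he h).elim h1 h2

lemma splitNet_src_mem : ∀ e ∈ C.splitNet.arcs, C.splitNet.src e ∈ C.splitNet.verts := by
  intro e he
  rcases mem_splitNet_arcs_iff.1 he with ⟨heG, hne0⟩ | ⟨b, hb, rfl⟩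
  · rw [splitNet_src_old heG]
    exact mem_splitNet_verts_of_mem (C.isPhylo.src_mem e heG) (src_ne_h_of_old heG hne0)
  · rw [splitNet_src_copyA hb]
    exact copyV_mem_splitNet_verts (mem_arcsBelowFinset_iff.1 hb).2.1

lemma splitNet_tgt_mem : ∀ e ∈ C.splitNet.arcs, C.splitNet.tgt e ∈ C.splitNet.verts := by
  intro e he
  rcases mem_splitNet_arcs_iff.1 he with ⟨heG, hne0⟩ | ⟨b, hb, rfl⟩
  · by_cases h1 : e = C.a1
    · rw [h1, splitNet_tgt_a1]; exact c_mem_splitNet_verts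
    · by_cases h2 : e = C.a2
      · rw [h2, splitNet_tgt_a2]; exact copyV_mem_splitNet_verts c_mem_below
      · rw [splitNet_tgt_old heG h1 h2]
        exact mem_splitNet_verts_of_mem (C.isPhylo.tgt_mem e heG) (tgt_ne_h_of_old heG h1 h2)
  · rw [splitNet_tgt_copyA hb]
    exact copyV_mem_splitNet_verts (mem_arcsBelowFinset_iff.1 hb).2.2

lemma splitNet_no_loop : ∀ e ∈ C.splitNet.arcs, C.splitNet.src e ≠ C.splitNet.tgt e := by
  intro e he
  rcases mem_splitNet_arcs_iff.1 he with ⟨heG, hne0⟩ | ⟨b, hb, rfl⟩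
  · by_cases h1 : e = C.a1
    · rw [h1, splitNet_tgt_a1, splitNet_src_a1]; exact p1_ne_c
    · by_cases h2 : e = C.a2
      · rw [h2, splitNet_tgt_a2, splitNet_src_a2]
        exact fun h => copyV_not_mem C.c (h ▸ p2_mem_verts)
      · rw [splitNet_tgt_old heG h1 h2, splitNet_src_old heG]
        exact C.isPhylo.no_loop e heG
  · rw [splitNet_tgt_copyA hb, splitNet_src_copyA hb]
    intro h
    exact C.isPhylo.no_loop b (mem_arcsBelowFinset_iff.1 hb).1 (copyV_injective h)

variable (C) in
noncomputable def orig (x : ℕ) : ℕ := if x ∈ C.belowFinset.image C.copyV then x - C.vertShift else x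

lemma orig_old {x : ℕ} (hx : x ∈ C.G.verts) : C.orig x = x := by
  unfold orig
  rw [if_neg (not_mem_image_copyV hx)]

lemma orig_copyV {w : ℕ} (hw : w ∈ C.below) : C.orig (C.copyV w) = w := by
  unfold orig
  rw [if_pos (Finset.mem_image.2 ⟨w, mem_belowFinset_iff.2 hw, rfl⟩), copyV_sub]

lemma orig_mem {x : ℕ} (hx : x ∈ C.splitNet.verts) : C.orig x ∈ C.G.verts := by
  rcases mem_splitNet_verts_iff.1 hx with ⟨hv, -⟩ | ⟨w, hw, rfl⟩
  · rw [orig_old hv]; exact hv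
  · rw [orig_copyV hw]; exact mem_verts_of_mem_below hw

-- A cycle of the split network would project to one of `G`: `a1 ↦ a1 a0`, `a2 ↦ a2 a0`.
lemma exists_walk_orig_of_arc : ∀ e ∈ C.splitNet.arcs,
    ∃ l, l ≠ [] ∧ IsWalk C.G l (C.orig (C.splitNet.src e)) (C.orig (C.splitNet.tgt e)) := by
  intro e he
  rcases mem_splitNet_arcs_iff.1 he with ⟨heG, hne0⟩ | ⟨b, hb, rfl⟩
  · by_cases h1 : e = C.a1
    · subst h1
      rw [splitNet_tgt_a1, splitNet_src_a1, orig_old p1_mem_verts, orig_old c_mem_verts]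
      exact ⟨[C.a1, C.a0], by simp,
        ⟨C.a1_mem, rfl, C.a0_mem, by rw [C.src_a0, C.tgt_a1], rfl, c_mem_verts⟩⟩
    · by_cases h2 : e = C.a2
      · subst h2
        rw [splitNet_tgt_a2, splitNet_src_a2, orig_old p2_mem_verts, orig_copyV c_mem_below]
        exact ⟨[C.a2, C.a0], by simp,
          ⟨C.a2_mem, rfl, C.a0_mem, by rw [C.src_a0, C.tgt_a2], rfl, c_mem_verts⟩⟩
      · rw [splitNet_tgt_old heG h1 h2, splitNet_src_old heG, orig_old (C.isPhylo.src_mem e heG),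
          orig_old (C.isPhylo.tgt_mem e heG)]
        exact ⟨[e], by simp, isWalk_singleton heG⟩
  · obtain ⟨hbG, hsb, htb⟩ := mem_arcsBelowFinset_iff.1 hb
    rw [splitNet_tgt_copyA hb, splitNet_src_copyA hb, orig_copyV hsb, orig_copyV htb]
    exact ⟨[b], by simp, isWalk_singleton hbG⟩

lemma exists_walk_orig : ∀ {l : List ℕ} {u v : ℕ}, IsWalk C.splitNet l u v →
    ∃ L, IsWalk C.G L (C.orig u) (C.orig v) ∧ (l ≠ [] → L ≠ []) := by
  intro l
  induction l with
  | nil =>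
      rintro u v ⟨rfl, hu⟩
      exact ⟨[], ⟨rfl, orig_mem hu⟩, by simp⟩
  | cons e l ih =>
      rintro u v ⟨he, hse, hw⟩
      obtain ⟨L1, hL1ne, hL1⟩ := exists_walk_orig_of_arc e he
      obtain ⟨L2, hL2, -⟩ := ih hw
      rw [hse] at hL1
      exact ⟨L1 ++ L2, hL1.append hL2, fun _ hnil => hL1ne (List.append_eq_nil_iff.1 hnil).1⟩

lemma splitNet_acyclic : ∀ (v : ℕ) (l : List ℕ), l ≠ [] → ¬ IsWalk C.splitNet l v v := by
  intro v l hne hw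
  obtain ⟨L, hL, hLne⟩ := exists_walk_orig hw
  exact C.isPhylo.acyclic _ L (hLne hne) hL

lemma r_mem_splitNet_verts : C.r ∈ C.splitNet.verts :=
  mem_splitNet_verts_of_mem C.isRootN_r.1 r_ne_h

lemma isRootN_splitNet_r : IsRootN C.splitNet C.r :=
  ⟨r_mem_splitNet_verts, by rw [inDeg_splitNet_old C.isRootN_r.1 r_ne_h]; exact C.isRootN_r.2⟩

lemma eq_r_of_isRootN_splitNet : ∀ x, IsRootN C.splitNet x → x = C.r := by
  rintro x ⟨hx, hdeg⟩
  rcases mem_splitNet_verts_iff.1 hx with ⟨hv, hneh⟩ | ⟨w, hw, rfl⟩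
  · rw [inDeg_splitNet_old hv hneh] at hdeg
    exact C.eq_r_of_isRootN x ⟨hv, hdeg⟩
  · rw [inDeg_splitNet_copyV hw] at hdeg
    exact absurd (inDeg_of_mem_below hw) (by omega)

lemma isPhylo_splitNet : IsPhylo C.splitNet := by
  refine ⟨splitNet_src_mem, splitNet_tgt_mem, splitNet_no_loop, splitNet_acyclic,
    ⟨C.r, isRootN_splitNet_r, eq_r_of_isRootN_splitNet⟩, ?_, ?_⟩
  · intro x hx
    rw [eq_r_of_isRootN_splitNet x hx, outDeg_splitNet_old C.isRootN_r.1 r_ne_h]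
    exact C.isPhylo.root_out C.r C.isRootN_r
  · intro v hv
    rcases mem_splitNet_verts_iff.1 hv with ⟨hvG, hneh⟩ | ⟨w, hw, rfl⟩
    · exact vertexType_of_deg_eq hv (inDeg_splitNet_old hvG hneh) (outDeg_splitNet_old hvG hneh)
        (C.isPhylo.types v hvG)
    · exact vertexType_of_deg_eq hv (inDeg_splitNet_copyV hw) (outDeg_splitNet_copyV hw)
        (C.isPhylo.types w (mem_verts_of_mem_below hw))

lemma isLeafN_splitNet_old_iff {v : ℕ} (hv : v ∈ C.G.verts) (hneh : v ≠ C.h) :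
    IsLeafN C.splitNet v ↔ IsLeafN C.G v := by
  unfold IsLeafN
  rw [inDeg_splitNet_old hv hneh, outDeg_splitNet_old hv hneh]
  exact ⟨fun h => ⟨hv, h.2⟩, fun h => ⟨mem_splitNet_verts_of_mem hv hneh, h.2⟩⟩

lemma isLeafN_splitNet_copyV_iff {w : ℕ} (hw : w ∈ C.below) :
    IsLeafN C.splitNet (C.copyV w) ↔ IsLeafN C.G w := by
  unfold IsLeafN
  rw [inDeg_splitNet_copyV hw, outDeg_splitNet_copyV hw]
  exact ⟨fun h => ⟨mem_verts_of_mem_below hw, h.2⟩, fun h => ⟨copyV_mem_splitNet_verts hw, h.2⟩⟩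

lemma isReticN_splitNet_old_iff {v : ℕ} (hv : v ∈ C.G.verts) (hneh : v ≠ C.h) :
    IsReticN C.splitNet v ↔ IsReticN C.G v := by
  unfold IsReticN
  rw [inDeg_splitNet_old hv hneh, outDeg_splitNet_old hv hneh]
  exact ⟨fun h => ⟨hv, h.2⟩, fun h => ⟨mem_splitNet_verts_of_mem hv hneh, h.2⟩⟩

lemma not_isReticN_splitNet_copyV {w : ℕ} (hw : w ∈ C.below) :
    ¬ IsReticN C.splitNet (C.copyV w) := by
  rintro ⟨-, hdeg, -⟩
  rw [inDeg_splitNet_copyV hw] at hdeg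
  have := inDeg_of_mem_below hw
  omega

lemma eq_h_or_mem_below_of_isWalk_from_h {l : List ℕ} {v : ℕ} (hw : IsWalk C.G l C.h v) :
    v = C.h ∨ v ∈ C.below := by
  cases l with
  | nil => exact Or.inl hw.1.symm
  | cons b l =>
      obtain ⟨hb, hsb, hw'⟩ := hw
      rw [C.eq_a0_of_src_eq_h b hb hsb] at hw'
      exact Or.inr (mem_below_of_isWalk c_mem_below hw')

lemma isWalk_splitNet_of_mem_below : ∀ {l : List ℕ} {w v : ℕ}, w ∈ C.below → IsWalk C.G l w v →
    IsWalk C.splitNet l w v := by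
  intro l
  induction l with
  | nil =>
      rintro w v hwS ⟨rfl, hmem⟩
      exact ⟨rfl, mem_splitNet_verts_of_mem hmem (fun h => h_not_mem_below (h ▸ hwS))⟩
  | cons b l ih =>
      rintro w v hwS ⟨hb, rfl, hw⟩
      have h0 : b ≠ C.a0 := by rintro rfl; exact h_not_mem_below (C.src_a0 ▸ hwS)
      have h1 : b ≠ C.a1 := by rintro rfl; exact p1_not_mem_below hwS
      have h2 : b ≠ C.a2 := by rintro rfl; exact p2_not_mem_below hwS
      refine ⟨mem_splitNet_arcs_of_mem hb h0, splitNet_src_old hb, ?_⟩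
      rw [splitNet_tgt_old hb h1 h2]
      exact ih (tgt_mem_below hb hwS) hw

lemma isWalk_of_splitNet_of_mem_below : ∀ {l : List ℕ} {w v : ℕ}, w ∈ C.below →
    IsWalk C.splitNet l w v → IsWalk C.G l w v := by
  intro l
  induction l with
  | nil =>
      rintro w v hwS ⟨rfl, hmem⟩
      exact ⟨rfl, mem_verts_of_mem_below hwS⟩
  | cons e l ih =>
      rintro w v hwS ⟨he, hse, hw⟩
      rcases mem_splitNet_arcs_iff.1 he with ⟨heG, hne0⟩ | ⟨b, hb, rfl⟩
      · rw [splitNet_src_old heG] at hse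
        have h1 : e ≠ C.a1 := by rintro rfl; exact p1_not_mem_below (hse ▸ hwS)
        have h2 : e ≠ C.a2 := by rintro rfl; exact p2_not_mem_below (hse ▸ hwS)
        rw [splitNet_tgt_old heG h1 h2] at hw
        exact ⟨heG, hse, ih (tgt_mem_below heG (hse ▸ hwS)) hw⟩
      · rw [splitNet_src_copyA hb] at hse
        exact absurd (hse ▸ mem_verts_of_mem_below hwS) (copyV_not_mem _)

lemma mem_below_of_isWalk_splitNet {l : List ℕ} {w v : ℕ} (hwS : w ∈ C.below)
    (hw : IsWalk C.splitNet l w v) : v ∈ C.below :=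
  mem_below_of_isWalk hwS (isWalk_of_splitNet_of_mem_below hwS hw)

lemma isWalk_splitNet_map_copyA : ∀ {l : List ℕ} {w v : ℕ}, w ∈ C.below → IsWalk C.G l w v →
    IsWalk C.splitNet (l.map C.copyA) (C.copyV w) (C.copyV v) := by
  intro l
  induction l with
  | nil =>
      rintro w v hwS ⟨rfl, hmem⟩
      exact ⟨rfl, copyV_mem_splitNet_verts hwS⟩
  | cons b l ih =>
      rintro w v hwS ⟨hb, hsb, hw⟩
      have hbB : b ∈ C.arcsBelowFinset :=
        mem_arcsBelowFinset_iff.2 ⟨hb, hsb ▸ hwS, tgt_mem_below hb (hsb ▸ hwS)⟩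
      refine ⟨copyA_mem_splitNet_arcs hbB, by rw [splitNet_src_copyA hbB, hsb], ?_⟩
      rw [splitNet_tgt_copyA hbB]
      exact ih (tgt_mem_below hb (hsb ▸ hwS)) hw

lemma exists_of_isWalk_splitNet_from_copyV : ∀ {l : List ℕ} {w : ℕ} {x : ℕ}, w ∈ C.below →
    IsWalk C.splitNet l (C.copyV w) x →
    ∃ l0 v, l = l0.map C.copyA ∧ v ∈ C.below ∧ x = C.copyV v ∧ IsWalk C.G l0 w v := by
  intro l
  induction l with
  | nil =>
      rintro w x hwS ⟨rfl, -⟩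
      exact ⟨[], w, rfl, hwS, rfl, rfl, mem_verts_of_mem_below hwS⟩
  | cons e l ih =>
      rintro w x hwS ⟨he, hse, hw⟩
      rcases mem_splitNet_arcs_iff.1 he with ⟨heG, hne0⟩ | ⟨b, hb, rfl⟩
      · rw [splitNet_src_old heG] at hse
        exact absurd (hse ▸ C.isPhylo.src_mem e heG) (copyV_not_mem w)
      · obtain ⟨hbG, hsbS, htbS⟩ := mem_arcsBelowFinset_iff.1 hb
        rw [splitNet_src_copyA hb] at hse
        have hsb : C.G.src b = w := copyV_injective hse
        rw [splitNet_tgt_copyA hb] at hw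
        obtain ⟨l0, v, rfl, hvS, rfl, hw0⟩ := ih htbS hw
        exact ⟨b :: l0, v, rfl, hvS, rfl, hbG, hsb, hw0⟩

variable (C) in
def Untouched (v : ℕ) : Prop := v ∈ C.G.verts ∧ v ∉ C.below ∧ v ≠ C.h

lemma untouched_r : C.Untouched C.r := ⟨C.isRootN_r.1, r_not_mem_below, r_ne_h⟩
lemma untouched_p1 : C.Untouched C.p1 := ⟨p1_mem_verts, p1_not_mem_below, p1_ne_h⟩
lemma untouched_p2 : C.Untouched C.p2 := ⟨p2_mem_verts, p2_not_mem_below, p2_ne_h⟩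

lemma tgt_not_mem_below {e : ℕ} (he : e ∈ C.G.arcs) (he0 : e ≠ C.a0)
    (hs : C.G.src e ∉ C.below) : C.G.tgt e ∉ C.below :=
  fun ht => (src_mem_below_or_eq_a0 he ht).elim hs he0

lemma isWalk_splitNet_of_untouched : ∀ {l : List ℕ} {u v : ℕ}, C.Untouched u → C.Untouched v →
    IsWalk C.G l u v → IsWalk C.splitNet l u v
  | [], _, _, hu, _, ⟨rfl, _⟩ => ⟨rfl, mem_splitNet_verts_of_mem hu.1 hu.2.2⟩
  | e :: _, _, _, hu, hv, ⟨he, rfl, hw⟩ => by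
      have h0 : e ≠ C.a0 := by rintro rfl; exact hu.2.2 C.src_a0
      have hh : C.G.tgt e ≠ C.h := fun hte =>
        (eq_h_or_mem_below_of_isWalk_from_h (hte ▸ hw)).elim hv.2.2 hv.2.1
      have h1 : e ≠ C.a1 := by rintro rfl; exact hh C.tgt_a1
      have h2 : e ≠ C.a2 := by rintro rfl; exact hh C.tgt_a2
      refine ⟨mem_splitNet_arcs_of_mem he h0, splitNet_src_old he, ?_⟩
      rw [splitNet_tgt_old he h1 h2]
      exact isWalk_splitNet_of_untouched
        ⟨C.isPhylo.tgt_mem e he, tgt_not_mem_below he h0 hu.2.1, hh⟩ hv hw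

lemma isWalk_of_isWalk_splitNet_of_untouched : ∀ {l : List ℕ} {u v : ℕ}, C.Untouched u →
    C.Untouched v → IsWalk C.splitNet l u v → IsWalk C.G l u v
  | [], _, _, hu, _, ⟨rfl, _⟩ => ⟨rfl, hu.1⟩
  | e :: _, _, _, hu, hv, ⟨he, hse, hw⟩ => by
      rcases mem_splitNet_arcs_iff.1 he with ⟨heG, h0⟩ | ⟨b, hb, rfl⟩
      · rw [splitNet_src_old heG] at hse
        subst hse
        by_cases h1 : e = C.a1
        · rw [h1, splitNet_tgt_a1] at hw
          exact absurd (mem_below_of_isWalk_splitNet c_mem_below hw) hv.2.1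
        by_cases h2 : e = C.a2
        · rw [h2, splitNet_tgt_a2] at hw
          obtain ⟨-, v', -, -, rfl, -⟩ := exists_of_isWalk_splitNet_from_copyV c_mem_below hw
          exact absurd hv.1 (copyV_not_mem v')
        rw [splitNet_tgt_old heG h1 h2] at hw
        exact ⟨heG, rfl, isWalk_of_isWalk_splitNet_of_untouched
          ⟨C.isPhylo.tgt_mem e heG, tgt_not_mem_below heG h0 hu.2.1, tgt_ne_h_of_old heG h1 h2⟩
          hv hw⟩
      · rw [splitNet_src_copyA hb] at hse
        exact absurd (hse ▸ hu.1) (copyV_not_mem _)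

lemma isWalk_splitNet_iff_of_untouched {l : List ℕ} {u v : ℕ} (hu : C.Untouched u)
    (hv : C.Untouched v) : IsWalk C.splitNet l u v ↔ IsWalk C.G l u v :=
  ⟨isWalk_of_isWalk_splitNet_of_untouched hu hv, isWalk_splitNet_of_untouched hu hv⟩

lemma a0_mem_of_isWalk_into_below : ∀ {l : List ℕ} {u v : ℕ}, u ∉ C.below → v ∈ C.below →
    IsWalk C.G l u v → C.a0 ∈ l := by
  intro l
  induction l with
  | nil => rintro u v huS hvS ⟨rfl, -⟩; exact absurd hvS huS
  | cons b l ih =>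
      rintro u v huS hvS ⟨hb, hsb, hw⟩
      by_cases h0 : b = C.a0
      · rw [h0]; exact List.mem_cons_self
      · refine List.mem_cons_of_mem _ (ih ?_ hvS hw)
        intro hS
        rcases src_mem_below_or_eq_a0 hb hS with h | h
        · exact huS (hsb ▸ h)
        · exact h0 h

lemma a1_mem_of_isWalk_splitNet_into_below : ∀ {l : List ℕ} {u v : ℕ}, u ∉ C.below → v ∈ C.below →
    IsWalk C.splitNet l u v → C.a1 ∈ l := by
  intro l
  induction l with
  | nil => rintro u v huS hvS ⟨rfl, -⟩; exact absurd hvS huS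
  | cons e l ih =>
      rintro u v huS hvS ⟨he, hse, hw⟩
      by_cases h1 : e = C.a1
      · rw [h1]; exact List.mem_cons_self
      · refine List.mem_cons_of_mem _ (ih ?_ hvS hw)
        rcases mem_splitNet_arcs_iff.1 he with ⟨heG, hne0⟩ | ⟨b, hb, rfl⟩
        · by_cases h2 : e = C.a2
          · rw [h2, splitNet_tgt_a2]
            exact fun hS => copyV_not_mem C.c (mem_verts_of_mem_below hS)
          · rw [splitNet_tgt_old heG h1 h2]
            intro hS
            rcases src_mem_below_or_eq_a0 heG hS with h | h
            · exact huS (hse ▸ (splitNet_src_old heG ▸ h))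
            · exact hne0 h
        · rw [splitNet_tgt_copyA hb]
          exact fun hS => copyV_not_mem _ (mem_verts_of_mem_below hS)

lemma a2_mem_of_isWalk_splitNet_leaving_verts : ∀ {l : List ℕ} {u x : ℕ}, u ∈ C.G.verts →
    x ∉ C.G.verts → IsWalk C.splitNet l u x → C.a2 ∈ l := by
  intro l
  induction l with
  | nil => rintro u x hu hx ⟨rfl, -⟩; exact absurd hu hx
  | cons e l ih =>
      rintro u x hu hx ⟨he, hse, hw⟩
      by_cases h2 : e = C.a2
      · rw [h2]; exact List.mem_cons_self
      · refine List.mem_cons_of_mem _ (ih ?_ hx hw)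
        rcases mem_splitNet_arcs_iff.1 he with ⟨heG, hne0⟩ | ⟨b, hb, rfl⟩
        · by_cases h1 : e = C.a1
          · rw [h1, splitNet_tgt_a1]; exact c_mem_verts
          · rw [splitNet_tgt_old heG h1 h2]; exact C.isPhylo.tgt_mem e heG
        · rw [splitNet_src_copyA hb] at hse
          exact absurd (hse ▸ hu) (copyV_not_mem _)

-- Inverse of the split on root paths: re-insert `a0` after the first `a1`, resp. after the
-- first `a2`, renaming the copied tail back in the second case.
variable (C) in
def unsplitViaA1 : List ℕ → List ℕ := fun l =>
  l.takeWhile (· != C.a1) ++ C.a1 :: C.a0 :: (l.dropWhile (· != C.a1)).tail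

variable (C) in
def unsplitViaA2 : List ℕ → List ℕ := fun l =>
  l.takeWhile (· != C.a2) ++
    C.a2 :: C.a0 :: ((l.dropWhile (· != C.a2)).tail.map (· - C.arcShift))

lemma unsplitViaA1_eq {t d : List ℕ} (ht : C.a1 ∉ t) :
    C.unsplitViaA1 (t ++ C.a1 :: d) = t ++ C.a1 :: C.a0 :: d := by
  obtain ⟨h1, h2⟩ := List.takeWhile_dropWhile_append_cons_of_not_mem (a := C.a1) d ht
  unfold unsplitViaA1
  rw [h1, h2]
  rfl

lemma map_sub_map_copyA (d : List ℕ) : (d.map C.copyA).map (· - C.arcShift) = d := by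
  simp [Function.comp_def, copyA_sub]

lemma unsplitViaA2_eq {t d : List ℕ} (ht : C.a2 ∉ t) :
    C.unsplitViaA2 (t ++ C.a2 :: d.map C.copyA) = t ++ C.a2 :: C.a0 :: d := by
  obtain ⟨h1, h2⟩ :=
    List.takeWhile_dropWhile_append_cons_of_not_mem (a := C.a2) (d.map C.copyA) ht
  unfold unsplitViaA2
  rw [h1, h2]
  simp only [List.tail_cons, map_sub_map_copyA]

lemma splitNet_walk_to_below_decomp {l : List ℕ} {v : ℕ} (hvS : v ∈ C.below)
    (hl : IsWalk C.splitNet l C.r v) :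
    ∃ t d, l = t ++ C.a1 :: d ∧ C.a1 ∉ t ∧ C.a0 ∉ t ∧
      IsWalk C.G t C.r C.p1 ∧ IsWalk C.G d C.c v := by
  obtain ⟨t, d, rfl, htna1⟩ := List.exists_eq_append_cons_not_mem
    (a1_mem_of_isWalk_splitNet_into_below r_not_mem_below hvS hl)
  obtain ⟨x, hx1, -, hsx, hwd⟩ := (isWalk_append_iff splitNet_src_mem).1 hl
  rw [splitNet_src_a1] at hsx
  subst hsx
  rw [splitNet_tgt_a1] at hwd
  have ha0t : C.a0 ∉ t := fun hmem => a0_not_mem_splitNet_arcs (hx1.arc_mem _ hmem)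
  refine ⟨t, d, rfl, htna1, ha0t, ?_, isWalk_of_splitNet_of_mem_below c_mem_below hwd⟩
  exact (isWalk_splitNet_iff_of_untouched untouched_r untouched_p1).1 hx1

lemma splitNet_walk_to_copy_decomp {l : List ℕ} {v : ℕ}
    (hl : IsWalk C.splitNet l C.r (C.copyV v)) :
    ∃ t d, l = t ++ C.a2 :: d.map C.copyA ∧ C.a2 ∉ t ∧ C.a0 ∉ t ∧
      IsWalk C.G t C.r C.p2 ∧ IsWalk C.G d C.c v := by
  obtain ⟨t, d, rfl, htna2⟩ := List.exists_eq_append_cons_not_mem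
    (a2_mem_of_isWalk_splitNet_leaving_verts C.isRootN_r.1 (copyV_not_mem v) hl)
  obtain ⟨x, hx1, -, hsx, hwd⟩ := (isWalk_append_iff splitNet_src_mem).1 hl
  rw [splitNet_src_a2] at hsx
  subst hsx
  rw [splitNet_tgt_a2] at hwd
  obtain ⟨d0, v', rfl, -, hv', hwd0⟩ := exists_of_isWalk_splitNet_from_copyV c_mem_below hwd
  obtain rfl := copyV_injective hv'
  have ha0t : C.a0 ∉ t := fun hmem => a0_not_mem_splitNet_arcs (hx1.arc_mem _ hmem)
  refine ⟨t, d0, rfl, htna2, ha0t, ?_, hwd0⟩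
  exact (isWalk_splitNet_iff_of_untouched untouched_r untouched_p2).1 hx1

lemma not_belowV_h_src_of_tgt_eq_h {e : ℕ} (he : e ∈ C.G.arcs) (hte : C.G.tgt e = C.h) :
    ¬ BelowV C.G C.h (C.G.src e) := fun ⟨l, hl⟩ =>
  C.isPhylo.acyclic C.h (l ++ [e]) (by simp) (hl.append ⟨he, rfl, hte, hte ▸ h_mem_verts⟩)

lemma walk_to_below_decomp {l : List ℕ} {v : ℕ} (hv : v ∈ C.below) (hl : IsWalk C.G l C.r v) :
    ∃ t e d, l = t ++ e :: C.a0 :: d ∧ (e = C.a1 ∨ e = C.a2) ∧ C.a1 ∉ t ∧ C.a2 ∉ t ∧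
      IsWalk C.G t C.r (C.G.src e) ∧ IsWalk C.G d C.c v := by
  obtain ⟨t', d, rfl, -⟩ :=
    List.exists_eq_append_cons_not_mem (a0_mem_of_isWalk_into_below r_not_mem_below hv hl)
  obtain ⟨x, hx, -, hx0, hd⟩ := (isWalk_append_iff C.isPhylo.src_mem).1 hl
  rw [C.src_a0] at hx0
  subst hx0
  rcases hx.eq_or_exists_last_arc C.isPhylo.src_mem with hrh | ⟨t, e, rfl, he, hte, ht⟩
  · exact absurd hrh r_ne_h
  have hnot : ∀ a ∈ t, C.G.tgt a ≠ C.h := fun a ha hta =>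
    not_belowV_h_src_of_tgt_eq_h he hte (hta ▸ ht.belowV_tgt_of_mem C.isPhylo.src_mem ha)
  exact ⟨t, e, d, by simp, C.eq_a1_or_a2_of_tgt_eq_h e he hte, fun h => hnot _ h C.tgt_a1,
    fun h => hnot _ h C.tgt_a2, ht, hd⟩

lemma walks_to_below_eq_union {v : ℕ} (hvS : v ∈ C.below) :
    {l : List ℕ | IsWalk C.G l C.r v} =
      C.unsplitViaA1 '' {l : List ℕ | IsWalk C.splitNet l C.r v} ∪
      C.unsplitViaA2 '' {l : List ℕ | IsWalk C.splitNet l C.r (C.copyV v)} := by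
  apply Set.eq_of_subset_of_subset
  · intro l hl
    obtain ⟨t0, e, d, rfl, he12, h1, h2, hwt, hwd⟩ := walk_to_below_decomp hvS hl
    rcases he12 with rfl | rfl
    · left
      refine ⟨t0 ++ C.a1 :: d, ?_, unsplitViaA1_eq h1⟩
      have hwt' : IsWalk C.splitNet t0 C.r C.p1 :=
        (isWalk_splitNet_iff_of_untouched untouched_r untouched_p1).2 hwt
      exact hwt'.append ⟨a1_mem_splitNet_arcs, splitNet_src_a1,
        splitNet_tgt_a1 ▸ isWalk_splitNet_of_mem_below c_mem_below hwd⟩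
    · right
      refine ⟨t0 ++ C.a2 :: d.map C.copyA, ?_, unsplitViaA2_eq h2⟩
      have hwt' : IsWalk C.splitNet t0 C.r C.p2 :=
        (isWalk_splitNet_iff_of_untouched untouched_r untouched_p2).2 hwt
      exact hwt'.append ⟨a2_mem_splitNet_arcs, splitNet_src_a2,
        splitNet_tgt_a2 ▸ isWalk_splitNet_map_copyA c_mem_below hwd⟩
  · rintro l (⟨l1, hl1, rfl⟩ | ⟨l2, hl2, rfl⟩)
    · obtain ⟨t, d, rfl, h1, -, hwt, hwd⟩ := splitNet_walk_to_below_decomp hvS hl1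
      rw [unsplitViaA1_eq h1]
      exact hwt.append ⟨C.a1_mem, rfl, C.a0_mem, by rw [C.src_a0, C.tgt_a1], hwd⟩
    · obtain ⟨t, d, rfl, h2, -, hwt, hwd⟩ := splitNet_walk_to_copy_decomp hl2
      rw [unsplitViaA2_eq h2]
      exact hwt.append ⟨C.a2_mem, rfl, C.a0_mem, by rw [C.src_a0, C.tgt_a2], hwd⟩

lemma injOn_unsplitViaA1 {v : ℕ} (hv : v ∈ C.below) :
    Set.InjOn C.unsplitViaA1 {l : List ℕ | IsWalk C.splitNet l C.r v} := by
  intro l hl l' hl' heq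
  obtain ⟨t, d, rfl, h1, -⟩ := splitNet_walk_to_below_decomp hv hl
  obtain ⟨t', d', rfl, h1', -⟩ := splitNet_walk_to_below_decomp hv hl'
  rw [unsplitViaA1_eq h1, unsplitViaA1_eq h1'] at heq
  obtain ⟨rfl, hd⟩ := List.append_cons_inj_of_not_mem heq h1 h1'
  rw [List.cons_injective hd]

lemma injOn_unsplitViaA2 (v : ℕ) :
    Set.InjOn C.unsplitViaA2 {l : List ℕ | IsWalk C.splitNet l C.r (C.copyV v)} := by
  intro l hl l' hl' heq
  obtain ⟨t, d, rfl, h2, -⟩ := splitNet_walk_to_copy_decomp hl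
  obtain ⟨t', d', rfl, h2', -⟩ := splitNet_walk_to_copy_decomp hl'
  rw [unsplitViaA2_eq h2, unsplitViaA2_eq h2'] at heq
  obtain ⟨rfl, hd⟩ := List.append_cons_inj_of_not_mem heq h2 h2'
  rw [List.cons_injective hd]

lemma disjoint_image_unsplitViaA1_image_unsplitViaA2 {v : ℕ} (hv : v ∈ C.below) :
    Disjoint (C.unsplitViaA1 '' {l : List ℕ | IsWalk C.splitNet l C.r v})
      (C.unsplitViaA2 '' {l : List ℕ | IsWalk C.splitNet l C.r (C.copyV v)}) := by
  rw [Set.disjoint_left]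
  rintro _ ⟨l1, hl1, rfl⟩ ⟨l2, hl2, heq⟩
  obtain ⟨t, d, rfl, h1, h0, -⟩ := splitNet_walk_to_below_decomp hv hl1
  obtain ⟨t', d', rfl, h2, h0', -⟩ := splitNet_walk_to_copy_decomp hl2
  rw [unsplitViaA1_eq h1, unsplitViaA2_eq h2] at heq
  have heq' : (t' ++ [C.a2]) ++ C.a0 :: d' = (t ++ [C.a1]) ++ C.a0 :: d := by simpa using heq
  obtain ⟨ht, -⟩ := List.append_cons_inj_of_not_mem heq' (by simp [h0', a0_ne_a2])
    (by simp [h0, a0_ne_a1])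
  exact C.a1_ne_a2 (List.singleton_inj.1 (List.append_inj' ht rfl).2).symm

lemma nPaths_eq_add_of_mem_below {v : ℕ} (hv : v ∈ C.below) :
    nPaths C.G C.r v = nPaths C.splitNet C.r v + nPaths C.splitNet C.r (C.copyV v) := by
  have hfin :=
    finite_setOf_isWalk (G := C.splitNet) splitNet_src_mem splitNet_tgt_mem splitNet_acyclic C.r
  rw [nPaths, nPaths, nPaths, walks_to_below_eq_union hv,
    Set.ncard_union_eq (disjoint_image_unsplitViaA1_image_unsplitViaA2 hv)
      ((hfin v).image _) ((hfin (C.copyV v)).image _),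
    (injOn_unsplitViaA1 hv).ncard_image, (injOn_unsplitViaA2 v).ncard_image]

lemma nPaths_splitNet_outside {v : ℕ} (hv : v ∈ C.G.verts) (hvS : v ∉ C.below) (hvh : v ≠ C.h) :
    nPaths C.splitNet C.r v = nPaths C.G C.r v := by
  unfold nPaths
  congr 1
  ext l
  exact isWalk_splitNet_iff_of_untouched untouched_r ⟨hv, hvS, hvh⟩

-- No arc other than `a0` joins a vertex below `c` to one outside.
lemma isCutArc_a0 : IsCutArc C.G C.a0 := by
  refine ⟨C.a0_mem, fun hrel => ?_⟩
  have hnot_below : ∀ x, Relation.ReflTransGen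
      (fun x y => ∃ b ∈ C.G.arcs, b ≠ C.a0 ∧
        ((C.G.src b = x ∧ C.G.tgt b = y) ∨ (C.G.src b = y ∧ C.G.tgt b = x)))
      (C.G.src C.a0) x → x ∉ C.below := by
    intro x hx
    induction hx with
    | refl => rw [C.src_a0]; exact h_not_mem_below
    | tail h1 h2 ih =>
        obtain ⟨b, hb, hbne, hcase⟩ := h2
        rcases hcase with ⟨hs, ht⟩ | ⟨hs, ht⟩
        · intro hS
          rcases src_mem_below_or_eq_a0 hb (ht ▸ hS) with hc | hc
          · exact ih (hs ▸ hc)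
          · exact hbne hc
        · intro hS
          exact ih (ht ▸ tgt_mem_below hb (hs ▸ hS))
  exact hnot_below _ hrel c_mem_below

lemma coe_splitNet_verts : (↑C.splitNet.verts : Set ℕ) =
    ((↑C.G.verts : Set ℕ) \ {C.h}) ∪ (C.copyV '' C.below) := by
  ext x
  rw [Finset.mem_coe, mem_splitNet_verts_iff]
  simp only [Set.mem_union, Set.mem_sdiff, Set.mem_singleton_iff, Set.mem_image,
    Finset.mem_coe]

lemma mem_arcsBelow_iff {b : ℕ} : b ∈ arcsBelow C.G C.c ↔ b ∈ C.arcsBelowFinset := by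
  rw [mem_arcsBelowFinset_iff]
  exact Iff.rfl

lemma coe_splitNet_arcs : (↑C.splitNet.arcs : Set ℕ) =
    ((↑C.G.arcs : Set ℕ) \ {C.a0}) ∪ (C.copyA '' arcsBelow C.G C.c) := by
  ext e
  rw [Finset.mem_coe, mem_splitNet_arcs_iff]
  simp only [Set.mem_union, Set.mem_sdiff, Set.mem_singleton_iff, Set.mem_image,
    Finset.mem_coe, mem_arcsBelow_iff]

variable (C) in
lemma splitRel_splitNet (lab : ℕ → ℕ) :
    SplitRel ⟨C.G, lab⟩ ⟨C.splitNet, fun x => lab (C.orig x)⟩ := by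
  refine ⟨C.h, C.p1, C.p2, C.c, C.a0, C.a1, C.a2, C.copyV, C.copyA, C.isReticN_h,
    ⟨C.a0_mem, C.src_a0, rfl⟩, isCutArc_a0, ⟨C.a1_mem, rfl, C.tgt_a1⟩, ⟨C.a2_mem, rfl, C.tgt_a2⟩,
    C.a1_ne_a2, a0_ne_a1, a0_ne_a2, copyV_injective.injOn, fun w _ => copyV_not_mem w,
    copyA_injective.injOn, fun b _ => copyA_not_mem b, coe_splitNet_verts, coe_splitNet_arcs,
    ?_, splitNet_src_a1, splitNet_tgt_a1, splitNet_src_a2, splitNet_tgt_a2, ?_, ?_, ?_⟩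
  · intro b hb _ h1 h2
    exact ⟨splitNet_src_old hb, splitNet_tgt_old hb h1 h2⟩
  · intro b hb
    have hb' := mem_arcsBelow_iff.1 hb
    exact ⟨splitNet_src_copyA hb', splitNet_tgt_copyA hb'⟩
  · intro v hv hvh
    show lab (C.orig v) = lab v
    rw [orig_old hv]
  · intro w hw
    show lab (C.orig (C.copyV w)) = lab w
    rw [orig_copyV hw]

lemma leaf_ne_h {v : ℕ} (hleaf : IsLeafN C.G v) : v ≠ C.h := by
  rintro rfl
  have h1 := hleaf.2.2
  have h2 := C.isReticN_h.2.2
  omega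

lemma isLeafN_orig {v : ℕ} (hv : IsLeafN C.splitNet v) : IsLeafN C.G (C.orig v) := by
  rcases mem_splitNet_verts_iff.1 hv.1 with ⟨h1, h2⟩ | ⟨w, hw, rfl⟩
  · rw [orig_old h1]; exact (isLeafN_splitNet_old_iff h1 h2).1 hv
  · rw [orig_copyV hw]; exact (isLeafN_splitNet_copyV_iff hw).1 hv

lemma filter_isLeafN_splitNet (p : ℕ → Prop) [DecidablePred p] :
    C.splitNet.verts.filter (fun v => IsLeafN C.splitNet v ∧ p (C.orig v)) =
      C.G.verts.filter (fun v => IsLeafN C.G v ∧ p v) ∪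
        ((C.G.verts.filter (fun v => IsLeafN C.G v ∧ p v)).filter (· ∈ C.belowFinset)).image
          C.copyV := by
  ext v
  simp only [Finset.mem_filter, Finset.mem_union, Finset.mem_image]
  constructor
  · rintro ⟨hv, hleaf, hp⟩
    rcases mem_splitNet_verts_iff.1 hv with ⟨h1, h2⟩ | ⟨w, hw, rfl⟩
    · rw [orig_old h1] at hp
      exact Or.inl ⟨h1, (isLeafN_splitNet_old_iff h1 h2).1 hleaf, hp⟩
    · rw [orig_copyV hw] at hp
      exact Or.inr ⟨w, ⟨⟨mem_verts_of_mem_below hw, (isLeafN_splitNet_copyV_iff hw).1 hleaf, hp⟩,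
        mem_belowFinset_iff.2 hw⟩, rfl⟩
  · rintro (⟨h1, hleaf, hp⟩ | ⟨w, ⟨⟨-, hleaf, hp⟩, hwB⟩, rfl⟩)
    · have h2 := leaf_ne_h hleaf
      exact ⟨mem_splitNet_verts_of_mem h1 h2, (isLeafN_splitNet_old_iff h1 h2).2 hleaf,
        by rwa [orig_old h1]⟩
    · have hw := mem_belowFinset_iff.1 hwB
      exact ⟨copyV_mem_splitNet_verts hw, (isLeafN_splitNet_copyV_iff hw).2 hleaf,
        by rwa [orig_copyV hw]⟩

lemma nPaths_splitNet_add_copy {v : ℕ} (hv : v ∈ C.G.verts) (hvh : v ≠ C.h) :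
    nPaths C.splitNet C.r v +
      (if v ∈ C.belowFinset then nPaths C.splitNet C.r (C.copyV v) else 0) = nPaths C.G C.r v := by
  by_cases hvB : v ∈ C.belowFinset
  · rw [if_pos hvB, nPaths_eq_add_of_mem_below (mem_belowFinset_iff.1 hvB)]
  · rw [if_neg hvB, add_zero,
      nPaths_splitNet_outside hv (fun h => hvB (mem_belowFinset_iff.2 h)) hvh]

lemma sum_nPaths_filter_isLeafN_splitNet (p : ℕ → Prop) [DecidablePred p] :
    ∑ v ∈ C.splitNet.verts.filter (fun v => IsLeafN C.splitNet v ∧ p (C.orig v)),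
        nPaths C.splitNet C.r v =
      ∑ v ∈ C.G.verts.filter (fun v => IsLeafN C.G v ∧ p v), nPaths C.G C.r v := by
  have hdisj : Disjoint (C.G.verts.filter (fun v => IsLeafN C.G v ∧ p v))
      (((C.G.verts.filter (fun v => IsLeafN C.G v ∧ p v)).filter (· ∈ C.belowFinset)).image
        C.copyV) := Finset.disjoint_left.2 fun x hx hx' => by
    obtain ⟨w, -, rfl⟩ := Finset.mem_image.1 hx'
    exact copyV_not_mem w (Finset.mem_filter.1 hx).1
  rw [filter_isLeafN_splitNet, Finset.sum_union hdisj,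
    Finset.sum_image fun x _ y _ h => copyV_injective h, Finset.sum_filter (· ∈ C.belowFinset),
    ← Finset.sum_add_distrib]
  refine Finset.sum_congr rfl fun v hv => ?_
  obtain ⟨h1, hleaf, -⟩ := Finset.mem_filter.1 hv
  exact nPaths_splitNet_add_copy h1 (leaf_ne_h hleaf)

variable (C) in
lemma mlRealizes_splitNet (lab : ℕ → ℕ) (m : List ℕ) (hR : MLRealizes ⟨C.G, lab⟩ m) :
    MLRealizes ⟨C.splitNet, fun x => lab (C.orig x)⟩ m := by
  obtain ⟨-, hlab, hcount⟩ := hR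
  refine ⟨isPhylo_splitNet, fun v hv => hlab _ (isLeafN_orig hv), fun i hi r hr => ?_⟩
  rw [eq_r_of_isRootN_splitNet r hr]
  exact (sum_nPaths_filter_isLeafN_splitNet (C := C) (fun v => lab v = i)).trans
    (hcount i hi C.r C.isRootN_r)

lemma reticulations_splitNet : reticulations C.splitNet = (reticulations C.G).erase C.h := by
  ext v
  simp only [reticulations, Finset.mem_filter, Finset.mem_erase]
  constructor
  · rintro ⟨hv, hret⟩
    rcases mem_splitNet_verts_iff.1 hv with ⟨h1, h2⟩ | ⟨w, hw, rfl⟩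
    · exact ⟨h2, h1, (isReticN_splitNet_old_iff h1 h2).1 hret⟩
    · exact absurd hret (not_isReticN_splitNet_copyV hw)
  · rintro ⟨h2, h1, hret⟩
    exact ⟨mem_splitNet_verts_of_mem h1 h2, (isReticN_splitNet_old_iff h1 h2).2 hret⟩

lemma card_reticulations_splitNet_lt :
    (reticulations C.splitNet).card < (reticulations C.G).card := by
  rw [reticulations_splitNet]
  exact Finset.card_erase_lt_of_mem (Finset.mem_filter.2 ⟨h_mem_verts, C.isReticN_h⟩)

lemma exists_of_lowest {G : Net} (hG : IsPhylo G) {h : ℕ} (hh : IsReticN G h)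
    (hlow : ∀ w, BelowV G h w → w ≠ h → ¬ IsReticN G w) : ∃ C : SplitSite, C.G = G := by
  obtain ⟨a0, ha0, hs0, hout⟩ := exists_out_arc_of_outDeg_eq_one hh.2.2
  obtain ⟨a1, a2, hne, ha1, ha2, ht1, ht2, hin⟩ := exists_in_arcs_of_inDeg_eq_two hh.2.1
  obtain ⟨r, hr, hr_uniq⟩ := hG.root_exu
  have hno : ∀ w, BelowV G (G.tgt a0) w → ¬ IsReticN G w := fun w ⟨l, hl⟩ => by
    refine hlow w ⟨a0 :: l, ha0, hs0, hl⟩ ?_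
    rintro rfl
    exact hG.acyclic _ (a0 :: l) (List.cons_ne_nil _ _) ⟨ha0, hs0, hl⟩
  exact ⟨⟨G, hG, h, a0, a1, a2, r, hh, ha0, hs0, hout, ha1, ha2, ht1, ht2, hne, hin, hno, hr,
    hr_uniq⟩, rfl⟩

end SplitSite

lemma exists_splitRel_of_not_isMLTree {m : List ℕ} {R : MLNet} (hR : MLRealizes R m)
    (hRt : ¬ IsMLTree R) : ∃ R', MLRealizes R' m ∧ SplitRel R R' ∧
      (reticulations R'.net).card < (reticulations R.net).card := by
  obtain ⟨v, hv⟩ := not_forall_not.1 hRt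
  obtain ⟨h, hh, hlow⟩ := exists_isReticN_forall_below_not_isReticN hR.1.acyclic hv
  obtain ⟨C, hC⟩ := SplitSite.exists_of_lowest hR.1 hh hlow
  obtain ⟨G, lab⟩ := R
  subst hC
  exact ⟨_, C.mlRealizes_splitNet lab m hR, C.splitRel_splitNet lab,
    C.card_reticulations_splitNet_lt⟩

end SplitConstruction

lemma exists_isMLTree_reflTransGen_pEdge (D : MLNet → MLNet → ℕ) {m : List ℕ} {R : MLNet}
    (hR : MLRealizes R m) : ∃ T, MLRealizes T m ∧ IsMLTree T ∧
      Relation.ReflTransGen (PEdge m D) R T ∧ Relation.ReflTransGen (PEdge m D) T R := by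
  induction hn : (reticulations R.net).card using Nat.strong_induction_on generalizing R with
  | _ n ih =>
    by_cases hRt : IsMLTree R
    · exact ⟨R, hR, hRt, .refl, .refl⟩
    obtain ⟨R', hR', hsplit, hlt⟩ := exists_splitRel_of_not_isMLTree hR hRt
    obtain ⟨T, hT, hTt, hR'T, hTR'⟩ := ih _ (hn ▸ hlt) hR' rfl
    exact ⟨T, hT, hTt, .head ⟨hR, hR', .inl hsplit⟩ hR'T, hTR'.tail ⟨hR', hR, .inr (.inl hsplit)⟩⟩

theorem ploidy_profile_space_connected_general (m : List ℕ)
    (D : MLNet → MLNet → ℕ)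
    (htree_conn : ∀ T T' : MLNet, MLRealizes T m → IsMLTree T →
      MLRealizes T' m → IsMLTree T' →
      Relation.ReflTransGen
        (fun A B => MLRealizes A m ∧ IsMLTree A ∧ MLRealizes B m ∧ IsMLTree B ∧
          D A B = 1) T T') :
    ∀ N N' : MLNet, MLRealizes N m → MLRealizes N' m →
      Relation.ReflTransGen (PEdge m D) N N' := by
  intro N N' hN hN'
  obtain ⟨T, hT, hTt, hNT, -⟩ := exists_isMLTree_reflTransGen_pEdge D hN
  obtain ⟨T', hT', hTt', -, hT'N'⟩ := exists_isMLTree_reflTransGen_pEdge D hN'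
  have hTT' : Relation.ReflTransGen (PEdge m D) T T' := by
    refine Relation.ReflTransGen.mono ?_ _ _ (htree_conn T T' hT hTt hT' hTt')
    rintro A B ⟨hA, hAt, hB, hBt, hD⟩
    exact ⟨hA, hB, .inr (.inr ⟨hAt, hBt, hD⟩)⟩
  exact (hNT.trans hTT').trans hT'N'

/-- For any ploidy profile `m` and any edit distance `D` on the
set of multiple-labelled trees realizing `m` whose associated tree space (trees
realizing `m`, edges = `D`-distance 1) is connected, ploidy profile space
`𝒫(m)` is connected. -/
theorem ploidy_profile_space_connected (m : List ℕ) (hm : IsProfileL m)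
    (D : MLNet → MLNet → ℕ)
    (htree_conn : ∀ T T' : MLNet, MLRealizes T m → IsMLTree T →
      MLRealizes T' m → IsMLTree T' →
      Relation.ReflTransGen
        (fun A B => MLRealizes A m ∧ IsMLTree A ∧ MLRealizes B m ∧ IsMLTree B ∧
          D A B = 1) T T') :
    ∀ N N' : MLNet, MLRealizes N m → MLRealizes N' m →
      Relation.ReflTransGen (PEdge m D) N N' :=
  ploidy_profile_space_connected_general m D htree_conn

end Ploidy
end

section
/- If m is the ploidy profile (n, n-1, n-2, ..., 1) with n >= 3, then for any ploidy profile m' obtained from m by removing at most one of its components, there exists a core network for m' that admits an HGT-consistent labelling. -/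
/-!
Formalization preamble for "Autopolyploidy, allopolyploidy, and phylogenetic
networks with horizontal arcs" (Huber & Maher).

Networks are finite directed multigraphs whose vertices and arcs are (finitely
many) natural numbers; parallel arcs (beads) are allowed, loops are not.
-/

namespace Ploidy

/-!
Removing at most one component of the staircase `(n, …, 1)` and simplifying peels it down to
`(2, 1, …, 1)` or, when the removed component is `2`, to `(3, 1, …, 1)`, with at least one `1`
left.  A profile `(2^b + 1, 1^q)` with `q ≥ 1` is realized by a chain of `b` beads below the root
ending in a reticulation `r`, whose second parent is, via a horizontal arc, the end of a
caterpillar spine carrying the `q` pendant leaves.  Labelling vertices by a topological numbering,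
with the spine lifted so that its end is level with `r`, is HGT-consistent: `r` is the only
reticulation outside a bead, and its horizontal parent is its only parent on its level.
-/

theorem reverse_range'_succ (a k : ℕ) :
    (List.range' a (k + 1)).reverse = (a + k) :: (List.range' a k).reverse := by
  simp [List.range'_1_concat]

theorem reverse_range'_one_succ (k : ℕ) :
    (List.range' 1 (k + 1)).reverse = (List.range' 2 k).reverse ++ [1] := by
  simp [List.range'_succ]

theorem map_succ_reverse_range (n : ℕ) :
    (List.range n).reverse.map (· + 1) = (List.range' 1 n).reverse := by
  simp [List.range'_eq_map_range, List.map_reverse, Nat.add_comm]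

theorem eraseIdx_reverse_range'_one (v i : ℕ) :
    ((List.range' 1 (v + 1 + i)).reverse).eraseIdx i =
      (List.range' (v + 2) i).reverse ++ (List.range' 1 v).reverse := by
  have : (List.range' 1 (v + 1 + i)).reverse =
      (List.range' (v + 2) i).reverse ++ (v + 1) :: (List.range' 1 v).reverse := by
    rw [← List.range'_append_1, List.range'_1_concat, show 1 + (v + 1) = v + 2 by omega,
      Nat.add_comm 1 v]
    simp
  rw [this, List.eraseIdx_append_of_length_le (by simp), List.length_reverse, List.length_range',
    Nat.sub_self, List.eraseIdx_cons_zero]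

theorem insertDesc_append {x : ℕ} {l r : List ℕ} (hl : ∀ y ∈ l, x ≤ y) (hr : ∀ y ∈ r, y < x) :
    insertDesc x (l ++ r) = l ++ x :: r := by
  induction l with
  | nil =>
    cases r with
    | nil => rfl
    | cons y ys => simp [insertDesc, (hr y (by simp)).not_ge]
  | cons y ys ih =>
    simp only [List.forall_mem_cons] at hl
    simp [insertDesc, hl.1, ih hl.2]

theorem simpStep_cons_cons {m₁ m₂ : ℕ} {rest : List ℕ} (h : ∃ x ∈ m₂ :: rest, x ≠ 1) :
    simpStep (m₁ :: m₂ :: rest) =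
      if m₁ = m₂ then m₂ :: rest
      else if m₂ < m₁ - m₂ then (m₁ - m₂) :: m₂ :: rest
      else insertDesc (m₁ - m₂) (m₂ :: rest) := by
  obtain ⟨x, hx, hx1⟩ := h
  rw [simpStep, if_neg fun hs => hx1 (hs.2 x hx)]

theorem simpStep_succ_cons {v : ℕ} {rest : List ℕ} (hv : 2 ≤ v) (hrest : ∀ x ∈ rest, 1 ≤ x) :
    simpStep ((v + 1) :: v :: rest) = v :: (rest ++ [1]) := by
  rw [simpStep_cons_cons ⟨v, by simp, by omega⟩, if_neg (by omega), if_neg (by omega),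
    Nat.add_sub_cancel_left, ← List.cons_append, ← List.append_nil (v :: rest),
    insertDesc_append _ (by simp)]
  · simp
  · simp only [List.forall_mem_cons]
    exact ⟨by omega, hrest⟩

theorem simpStep_add_four_cons (w s : ℕ) :
    simpStep ((w + 4) :: ((List.range' 1 (w + 2)).reverse ++ List.replicate s 1)) =
      (List.range' 2 (w + 1)).reverse ++ 2 :: List.replicate (s + 1) 1 := by
  rw [reverse_range'_succ, reverse_range'_one_succ, List.cons_append,
    simpStep_cons_cons ⟨1 + (w + 1), by simp, by omega⟩, if_neg (by omega), if_neg (by omega),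
    show w + 4 - (1 + (w + 1)) = 2 by omega, List.append_assoc, List.singleton_append,
    ← List.cons_append, insertDesc_append]
  · simp only [List.cons_append, reverse_range'_succ, List.replicate_succ, List.cons.injEq,
      and_true]
    omega
  · simp only [List.mem_cons, List.mem_reverse, List.mem_range'_1]
    omega
  · simp only [List.mem_cons, List.mem_replicate]
    omega

theorem simpStep_two_two (rest : List ℕ) : simpStep (2 :: 2 :: rest) = 2 :: rest := by
  rw [simpStep_cons_cons ⟨2, by simp, by omega⟩, if_pos rfl]

theorem simpStep_iterate_run {a : ℕ} (ha : 2 ≤ a) (k : ℕ) {rest : List ℕ}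
    (hrest : ∀ x ∈ rest, 1 ≤ x) :
    simpStep^[k] ((List.range' a (k + 1)).reverse ++ rest) =
      a :: (rest ++ List.replicate k 1) := by
  induction k generalizing rest with
  | zero => simp
  | succ k ih =>
    have hrest' : ∀ x ∈ (List.range' a k).reverse ++ rest, 1 ≤ x := by
      simp only [List.mem_append, List.mem_reverse, List.mem_range'_1]
      rintro x (hx | hx) <;> [omega; exact hrest x hx]
    have := ih (rest := rest ++ [1]) (by simpa using fun x hx => hx.elim (hrest x) (by omega))
    rw [reverse_range'_succ, reverse_range'_succ, List.cons_append, List.cons_append,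
      Function.iterate_succ_apply, ← Nat.add_assoc, simpStep_succ_cons (by omega) hrest']
    rw [reverse_range'_succ, List.cons_append] at this
    rw [List.append_assoc, this, List.append_assoc, List.singleton_append,
      ← List.replicate_succ, List.replicate_succ']

theorem isSimpleP_cons_replicate {h : ℕ} (hh : 2 ≤ h) (q : ℕ) :
    IsSimpleP (h :: List.replicate q 1) :=
  ⟨List.cons_ne_nil _ _, hh, fun _ hx => List.eq_of_mem_replicate hx⟩

theorem IsTerminal.of_iterate {m m' mt : List ℕ} (k : ℕ) (h : simpStep^[k] m = m')
    (ht : IsTerminal m' mt) : IsTerminal m mt := by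
  obtain ⟨hs, l, rfl⟩ := ht
  exact ⟨hs, l + k, by rw [Function.iterate_add_apply, h]⟩

theorem isTerminal_self {mt : List ℕ} (h : IsSimpleP mt) : IsTerminal mt mt := ⟨h, 0, rfl⟩

theorem isTerminal_run_append_ones {a : ℕ} (ha : 2 ≤ a) (k s : ℕ) :
    IsTerminal ((List.range' a (k + 1)).reverse ++ List.replicate s 1)
      (a :: List.replicate (s + k) 1) := by
  refine .of_iterate k (simpStep_iterate_run ha k (by simp)) ?_
  rw [← List.replicate_add]
  exact isTerminal_self (isSimpleP_cons_replicate ha _)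

theorem isTerminal_staircase_erase_of_three_le {w j : ℕ} :
    IsTerminal ((List.range' (w + 4) (j + 1)).reverse ++ (List.range' 1 (w + 2)).reverse)
      (2 :: List.replicate (j + 1 + w) 1) := by
  refine .of_iterate j (simpStep_iterate_run (by omega) j
    (by simp only [List.mem_reverse, List.mem_range'_1]; omega)) ?_
  refine .of_iterate 1 (simpStep_add_four_cons w j) ?_
  refine .of_iterate w (simpStep_iterate_run le_rfl w (by simp)) ?_
  refine .of_iterate 1 (simpStep_two_two _) ?_
  simpa [List.replicate_add] using isTerminal_self (isSimpleP_cons_replicate le_rfl (j + 1 + w))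

theorem isTerminal_staircase_eraseIdx {n : ℕ} (hn : 3 ≤ n) {m' : List ℕ}
    (hm' : m' = (List.range n).reverse.map (· + 1) ∨
      ∃ i < n, m' = ((List.range n).reverse.map (· + 1)).eraseIdx i) :
    ∃ h q, (h = 2 ∨ h = 3) ∧ 1 ≤ q ∧ IsTerminal m' (h :: List.replicate q 1) := by
  rw [map_succ_reverse_range] at hm'
  rcases hm' with rfl | ⟨i, hi, rfl⟩
  · obtain ⟨p, rfl⟩ : ∃ p, n = p + 1 + 1 + 1 := ⟨n - 3, by omega⟩
    rw [reverse_range'_one_succ]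
    exact ⟨2, _, .inl rfl, by omega, isTerminal_run_append_ones le_rfl (p + 1) 1⟩
  obtain ⟨v, rfl⟩ : ∃ v, n = v + 1 + i := ⟨n - 1 - i, by omega⟩
  rw [eraseIdx_reverse_range'_one]
  rcases i with _ | j
  · obtain ⟨p, rfl⟩ : ∃ p, v = p + 1 + 1 := ⟨v - 2, by omega⟩
    rw [List.range'_zero, List.reverse_nil, List.nil_append, reverse_range'_one_succ]
    exact ⟨2, _, .inl rfl, by omega, isTerminal_run_append_ones le_rfl p 1⟩
  rcases v with _ | _ | w
  · exact ⟨2, _, .inl rfl, by omega, isTerminal_run_append_ones le_rfl j 0⟩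
  · exact ⟨3, _, .inr rfl, by omega, isTerminal_run_append_ones (by omega) j 1⟩
  · exact ⟨2, _, .inl rfl, by omega, isTerminal_staircase_erase_of_three_le⟩

def outArcs (G : Net) (v : ℕ) : Finset ℕ := G.arcs.filter fun a => G.src a = v

def inArcs (G : Net) (v : ℕ) : Finset ℕ := G.arcs.filter fun a => G.tgt a = v

theorem outDeg_eq_card (G : Net) (v : ℕ) : outDeg G v = (outArcs G v).card := rfl

theorem inDeg_eq_card (G : Net) (v : ℕ) : inDeg G v = (inArcs G v).card := rfl

def ArcsIncreasing (G : Net) : Prop := ∀ a ∈ G.arcs, G.src a < G.tgt a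

section Walks

variable {G : Net}

theorem IsWalk.mem_arcs {l : List ℕ} {u v : ℕ} (h : IsWalk G l u v) : ∀ a ∈ l, a ∈ G.arcs := by
  induction l generalizing u with
  | nil => simp
  | cons b l ih =>
    simp only [List.mem_cons, forall_eq_or_imp]
    exact ⟨h.1, ih h.2.2⟩

theorem IsWalk.mem_of_closed {S : Set ℕ} (hS : ∀ a ∈ G.arcs, G.src a ∈ S → G.tgt a ∈ S)
    {l : List ℕ} {u v : ℕ} (h : IsWalk G l u v) (hu : u ∈ S) : v ∈ S := by
  induction l generalizing u with
  | nil => exact h.1 ▸ hu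
  | cons a l ih => exact ih h.2.2 (hS a h.1 (h.2.1 ▸ hu))

theorem nPaths_eq_zero_of_closed {S : Set ℕ} (hS : ∀ a ∈ G.arcs, G.src a ∈ S → G.tgt a ∈ S)
    {u v : ℕ} (hu : u ∈ S) (hv : v ∉ S) : nPaths G u v = 0 := by
  have : {l | IsWalk G l u v} = ∅ :=
    Set.eq_empty_of_forall_notMem fun l hl => hv (IsWalk.mem_of_closed hS hl hu)
  rw [nPaths, this, Set.ncard_empty]

namespace ArcsIncreasing

variable (hG : ArcsIncreasing G)
include hG

theorem add_length_le {l : List ℕ} {u v : ℕ} (h : IsWalk G l u v) : u + l.length ≤ v := by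
  induction l generalizing u with
  | nil => simp [h.1]
  | cons a l ih =>
    have := h.2.1 ▸ hG a h.1
    have := ih h.2.2
    simp only [List.length_cons]
    omega

theorem not_isWalk_self {l : List ℕ} (hl : l ≠ []) (v : ℕ) : ¬ IsWalk G l v v := fun h => by
  have := hG.add_length_le h
  exact hl (List.eq_nil_of_length_eq_zero (by omega))

theorem finite_walks (u v : ℕ) : {l : List ℕ | IsWalk G l u v}.Finite := by
  refine ((List.finite_length_le G.arcs (v - u)).image (List.map Subtype.val)).subset ?_
  intro l hl
  refine ⟨l.attachWith _ (IsWalk.mem_arcs hl), ?_, List.attachWith_map_subtype_val _⟩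
  have := hG.add_length_le hl
  show (l.attachWith _ _).length ≤ v - u
  rw [List.length_attachWith]
  omega

theorem nPaths_self {v : ℕ} (hv : v ∈ G.verts) : nPaths G v v = 1 := by
  rw [nPaths, Set.ncard_eq_one]
  refine ⟨[], Set.eq_singleton_iff_unique_mem.mpr ⟨⟨rfl, hv⟩, fun l hl => ?_⟩⟩
  by_contra hne
  exact hG.not_isWalk_self hne v hl

theorem nPaths_eq_sum {u v : ℕ} (huv : u ≠ v) :
    nPaths G u v = ∑ a ∈ outArcs G u, nPaths G (G.tgt a) v := by
  have hW : {l | IsWalk G l u v} =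
      ⋃ a ∈ (outArcs G u : Set ℕ),
        List.cons a '' {l | IsWalk G l (G.tgt a) v} := by
    ext l
    cases l with
    | nil => simp [IsWalk, huv]
    | cons a l => simpa [IsWalk, outArcs, and_assoc] using and_rotate.symm
  rw [nPaths, hW, Set.Finite.ncard_biUnion (Finset.finite_toSet _)
    (fun a _ => (hG.finite_walks _ _).image _), finsum_mem_coe_finset]
  · exact Finset.sum_congr rfl fun a _ => Set.ncard_image_of_injective _ List.cons_injective
  · intro a _ b _ hab
    exact Set.disjoint_left.mpr fun l ⟨_, _, ha⟩ ⟨_, _, hb⟩ => hab (by grind)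

end ArcsIncreasing

end Walks

/-- Vertex `0` is the root, `1, …, q` is a caterpillar spine, the `j`-th bead (`j < b`) has tree
vertex `q + 2j + 1` and reticulation `q + 2j + 2`, `q + 2b + 1` is the reticulation fed by the
bead chain (by the root if `b = 0`) and, horizontally, by the spine end `q`, `q + 2b + 2` is the
leaf `x₁`, and `q + 2b + 2 + i` is the pendant leaf of the spine vertex `i`.  Arc `0` is the
horizontal arc, arc `v ∈ [1, 2q + 2b + 3)` is the (first) arc into `v`, and arc
`2q + 2b + 3 + j` is the second arc of the `j`-th bead. -/
def caterpillarBeadNet (b q : ℕ) : Net where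
  verts := Finset.range (2 * q + 2 * b + 3)
  arcs := Finset.range (2 * q + 3 * b + 3)
  src a :=
    if a = 0 then q
    else if a = 1 ∨ a = q + 1 then 0
    else if a ≤ q + 2 * b + 2 then a - 1
    else if a < 2 * q + 2 * b + 3 then a - (q + 2 * b + 2)
    else q + 2 * (a - (2 * q + 2 * b + 3)) + 1
  tgt a :=
    if a = 0 then q + 2 * b + 1
    else if a < 2 * q + 2 * b + 3 then a
    else q + 2 * (a - (2 * q + 2 * b + 3)) + 2

def caterpillarBeadTime (b q v : ℕ) : ℕ := if 1 ≤ v ∧ v ≤ q then v + 2 * b + 1 else v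

namespace caterpillarBeadNet

variable {b q : ℕ}

theorem mem_verts {v : ℕ} : v ∈ (caterpillarBeadNet b q).verts ↔ v < 2 * q + 2 * b + 3 :=
  Finset.mem_range

theorem mem_arcs {a : ℕ} : a ∈ (caterpillarBeadNet b q).arcs ↔ a < 2 * q + 3 * b + 3 :=
  Finset.mem_range

theorem arcsIncreasing : ArcsIncreasing (caterpillarBeadNet b q) := by
  intro a _
  simp only [caterpillarBeadNet]
  split_ifs <;> omega

theorem outArcs_zero (hq : 1 ≤ q) : outArcs (caterpillarBeadNet b q) 0 = {1, q + 1} := by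
  ext a
  rw [outArcs, Finset.mem_filter, mem_arcs]
  simp only [caterpillarBeadNet, Finset.mem_insert, Finset.mem_singleton]
  split_ifs <;> grind

theorem outArcs_spine {i : ℕ} (h1 : 1 ≤ i) (hi : i ≤ q) :
    outArcs (caterpillarBeadNet b q) i = {if i < q then i + 1 else 0, q + 2 * b + 2 + i} := by
  ext a
  rw [outArcs, Finset.mem_filter, mem_arcs]
  simp only [caterpillarBeadNet, Finset.mem_insert, Finset.mem_singleton]
  split_ifs <;> grind

theorem outArcs_beadTop {j : ℕ} (hj : j < b) :
    outArcs (caterpillarBeadNet b q) (q + 2 * j + 1) = {q + 2 * j + 2, 2 * q + 2 * b + 3 + j} := by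
  ext a
  rw [outArcs, Finset.mem_filter, mem_arcs]
  simp only [caterpillarBeadNet, Finset.mem_insert, Finset.mem_singleton]
  split_ifs <;> grind

theorem outArcs_beadBot {j : ℕ} (hj : j < b) :
    outArcs (caterpillarBeadNet b q) (q + 2 * j + 2) = {q + 2 * j + 3} := by
  ext a
  rw [outArcs, Finset.mem_filter, mem_arcs]
  simp only [caterpillarBeadNet, Finset.mem_singleton]
  split_ifs <;> grind

theorem outArcs_ret : outArcs (caterpillarBeadNet b q) (q + 2 * b + 1) = {q + 2 * b + 2} := by
  ext a
  rw [outArcs, Finset.mem_filter, mem_arcs]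
  simp only [caterpillarBeadNet, Finset.mem_singleton]
  split_ifs <;> grind

theorem outArcs_leaf {v : ℕ} (hv : q + 2 * b + 2 ≤ v) : outArcs (caterpillarBeadNet b q) v = ∅ := by
  ext a
  rw [outArcs, Finset.mem_filter, mem_arcs]
  simp only [caterpillarBeadNet, Finset.notMem_empty, iff_false, not_and]
  split_ifs <;> grind

theorem inArcs_zero : inArcs (caterpillarBeadNet b q) 0 = ∅ := by
  ext a
  rw [inArcs, Finset.mem_filter, mem_arcs]
  simp only [caterpillarBeadNet, Finset.notMem_empty, iff_false, not_and]
  split_ifs <;> grind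

theorem inArcs_tree {v : ℕ} (hv : (1 ≤ v ∧ v ≤ q) ∨ (∃ j < b, v = q + 2 * j + 1) ∨
    (q + 2 * b + 2 ≤ v ∧ v < 2 * q + 2 * b + 3)) : inArcs (caterpillarBeadNet b q) v = {v} := by
  have hv' : (1 ≤ v ∧ v ≤ q) ∨ (q < v ∧ v < q + 2 * b ∧ (v - q) % 2 = 1) ∨
      (q + 2 * b + 2 ≤ v ∧ v < 2 * q + 2 * b + 3) := by
    rcases hv with hv | ⟨j, hj, rfl⟩ | hv <;> omega
  ext a
  rw [inArcs, Finset.mem_filter, mem_arcs]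
  simp only [caterpillarBeadNet, Finset.mem_singleton]
  split_ifs <;> grind

theorem inArcs_beadBot {j : ℕ} (hj : j < b) :
    inArcs (caterpillarBeadNet b q) (q + 2 * j + 2) = {q + 2 * j + 2, 2 * q + 2 * b + 3 + j} := by
  ext a
  rw [inArcs, Finset.mem_filter, mem_arcs]
  simp only [caterpillarBeadNet, Finset.mem_insert, Finset.mem_singleton]
  split_ifs <;> grind

theorem inArcs_ret (hq : 1 ≤ q) :
    inArcs (caterpillarBeadNet b q) (q + 2 * b + 1) = {0, q + 2 * b + 1} := by
  ext a
  rw [inArcs, Finset.mem_filter, mem_arcs]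
  simp only [caterpillarBeadNet, Finset.mem_insert, Finset.mem_singleton]
  split_ifs <;> grind

theorem src_zero : (caterpillarBeadNet b q).src 0 = q := rfl

theorem tgt_zero : (caterpillarBeadNet b q).tgt 0 = q + 2 * b + 1 := rfl

theorem tgt_of_lt {a : ℕ} (h0 : a ≠ 0) (ha : a < 2 * q + 2 * b + 3) :
    (caterpillarBeadNet b q).tgt a = a := by
  simp only [caterpillarBeadNet]
  split_ifs <;> omega

theorem tgt_beadArc (j : ℕ) :
    (caterpillarBeadNet b q).tgt (2 * q + 2 * b + 3 + j) = q + 2 * j + 2 := by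
  simp only [caterpillarBeadNet]
  split_ifs <;> omega

theorem isRootN_zero : IsRootN (caterpillarBeadNet b q) 0 :=
  ⟨mem_verts.mpr (by omega), by rw [inDeg_eq_card, inArcs_zero, Finset.card_empty]⟩

theorem isTreeVert_spine {i : ℕ} (h1 : 1 ≤ i) (hi : i ≤ q) :
    IsTreeVert (caterpillarBeadNet b q) i :=
  ⟨mem_verts.mpr (by omega),
    by rw [inDeg_eq_card, inArcs_tree (.inl ⟨h1, hi⟩), Finset.card_singleton],
    by rw [outDeg_eq_card, outArcs_spine h1 hi, Finset.card_pair (by split_ifs <;> omega)]⟩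

theorem isTreeVert_beadTop {j : ℕ} (hj : j < b) :
    IsTreeVert (caterpillarBeadNet b q) (q + 2 * j + 1) :=
  ⟨mem_verts.mpr (by omega), by rw [inDeg_eq_card, inArcs_tree (.inr (.inl ⟨j, hj, rfl⟩)),
    Finset.card_singleton], by rw [outDeg_eq_card, outArcs_beadTop hj, Finset.card_pair (by omega)]⟩

theorem isReticN_beadBot {j : ℕ} (hj : j < b) :
    IsReticN (caterpillarBeadNet b q) (q + 2 * j + 2) :=
  ⟨mem_verts.mpr (by omega), by rw [inDeg_eq_card, inArcs_beadBot hj, Finset.card_pair (by omega)],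
    by rw [outDeg_eq_card, outArcs_beadBot hj, Finset.card_singleton]⟩

theorem isReticN_ret (hq : 1 ≤ q) : IsReticN (caterpillarBeadNet b q) (q + 2 * b + 1) :=
  ⟨mem_verts.mpr (by omega), by rw [inDeg_eq_card, inArcs_ret hq, Finset.card_pair (by omega)],
    by rw [outDeg_eq_card, outArcs_ret, Finset.card_singleton]⟩

theorem isLeafN_of_le {v : ℕ} (h1 : q + 2 * b + 2 ≤ v) (h2 : v < 2 * q + 2 * b + 3) :
    IsLeafN (caterpillarBeadNet b q) v :=
  ⟨mem_verts.mpr h2, by rw [inDeg_eq_card, inArcs_tree (.inr (.inr ⟨h1, h2⟩)),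
    Finset.card_singleton], by rw [outDeg_eq_card, outArcs_leaf h1, Finset.card_empty]⟩

theorem inBead_beadBot {j : ℕ} (hj : j < b) : InBead (caterpillarBeadNet b q) (q + 2 * j + 2) := by
  have htgt : (caterpillarBeadNet b q).tgt (q + 2 * j + 2) = q + 2 * j + 2 :=
    tgt_of_lt (by omega) (by omega)
  refine ⟨q + 2 * j + 2, 2 * q + 2 * b + 3 + j, mem_arcs.mpr (by omega), mem_arcs.mpr (by omega),
    by omega, ?_, by rw [htgt, tgt_beadArc], .inr htgt⟩
  simp only [caterpillarBeadNet]
  split_ifs <;> grind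

theorem vertex_cases (hq : 1 ≤ q) {v : ℕ} (hv : v < 2 * q + 2 * b + 3) :
    (IsRootN (caterpillarBeadNet b q) v ∧ v = 0) ∨ IsTreeVert (caterpillarBeadNet b q) v ∨
      (IsReticN (caterpillarBeadNet b q) v ∧
        (InBead (caterpillarBeadNet b q) v ∨ v = q + 2 * b + 1)) ∨
      (IsLeafN (caterpillarBeadNet b q) v ∧ q + 2 * b + 2 ≤ v) := by
  by_cases h0 : v = 0
  · exact .inl ⟨h0 ▸ isRootN_zero, h0⟩
  by_cases hs : v ≤ q
  · exact .inr (.inl (isTreeVert_spine (by omega) hs))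
  by_cases hl : q + 2 * b + 2 ≤ v
  · exact .inr (.inr (.inr ⟨isLeafN_of_le hl hv, hl⟩))
  by_cases hr : v = q + 2 * b + 1
  · exact .inr (.inr (.inl ⟨hr ▸ isReticN_ret hq, .inr hr⟩))
  obtain ⟨j, hj, rfl | rfl⟩ : ∃ j < b, v = q + 2 * j + 1 ∨ v = q + 2 * j + 2 :=
    ⟨(v - q - 1) / 2, by omega, by omega⟩
  · exact .inr (.inl (isTreeVert_beadTop hj))
  · exact .inr (.inr (.inl ⟨isReticN_beadBot hj, .inl (inBead_beadBot hj)⟩))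

theorem eq_zero_of_isRootN (hq : 1 ≤ q) {v : ℕ} (hv : IsRootN (caterpillarBeadNet b q) v) :
    v = 0 := by
  rcases vertex_cases hq (mem_verts.mp hv.1) with ⟨_, rfl⟩ | h | ⟨h, _⟩ | ⟨h, _⟩
  · rfl
  all_goals have := hv.2.symm.trans h.2.1; omega

theorem le_of_isLeafN (hq : 1 ≤ q) {v : ℕ} (hv : IsLeafN (caterpillarBeadNet b q) v) :
    q + 2 * b + 2 ≤ v := by
  rcases vertex_cases hq (mem_verts.mp hv.1) with ⟨h, _⟩ | h | ⟨h, _⟩ | ⟨_, h⟩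
  · have := hv.2.1.symm.trans h.2
    omega
  all_goals first | exact h | have := hv.2.2.symm.trans h.2.2; omega

theorem eq_ret_of_isReticN (hq : 1 ≤ q) {v : ℕ} (hv : IsReticN (caterpillarBeadNet b q) v)
    (hb : ¬ InBead (caterpillarBeadNet b q) v) : v = q + 2 * b + 1 := by
  rcases vertex_cases hq (mem_verts.mp hv.1) with ⟨h, _⟩ | h | ⟨_, h | h⟩ | ⟨h, _⟩
  · have := hv.2.1.symm.trans h.2
    omega
  · have := hv.2.1.symm.trans h.2.1
    omega
  · exact absurd h hb
  · exact h
  · have := hv.2.1.symm.trans h.2.1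
    omega

theorem isPhylo (hq : 1 ≤ q) : IsPhylo (caterpillarBeadNet b q) where
  src_mem a ha := by
    simp only [mem_arcs, mem_verts] at ha ⊢
    simp only [caterpillarBeadNet]
    split_ifs <;> omega
  tgt_mem a ha := by
    simp only [mem_arcs, mem_verts] at ha ⊢
    simp only [caterpillarBeadNet]
    split_ifs <;> omega
  no_loop a ha := (arcsIncreasing a ha).ne
  acyclic v l hl := arcsIncreasing.not_isWalk_self hl v
  root_exu := ⟨0, isRootN_zero, fun _ hv => eq_zero_of_isRootN hq hv⟩
  root_out v hv := by
    rw [eq_zero_of_isRootN hq hv, outDeg_eq_card, outArcs_zero hq, Finset.card_pair (by omega)]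
  types v hv := by
    rcases vertex_cases hq (mem_verts.mp hv) with ⟨h, _⟩ | h | ⟨h, _⟩ | ⟨h, _⟩
    · exact .inl h
    · exact .inr (.inr (.inl h))
    · exact .inr (.inr (.inr h))
    · exact .inr (.inl h)

theorem time_src_lt_time_tgt (hq : 1 ≤ q) {a : ℕ} (h0 : a ≠ 0) :
    caterpillarBeadTime b q ((caterpillarBeadNet b q).src a) <
      caterpillarBeadTime b q ((caterpillarBeadNet b q).tgt a) := by
  simp only [caterpillarBeadTime, caterpillarBeadNet]
  split_ifs <;> omega

theorem time_spineEnd_eq_time_ret (hq : 1 ≤ q) :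
    caterpillarBeadTime b q q = caterpillarBeadTime b q (q + 2 * b + 1) := by
  rw [caterpillarBeadTime, caterpillarBeadTime, if_pos ⟨hq, le_rfl⟩, if_neg (by omega)]

theorem exists_child_time_lt (hq : 1 ≤ q) {u : ℕ} (hu : u < q + 2 * b + 2) :
    ∃ v, IsParent (caterpillarBeadNet b q) u v ∧
      caterpillarBeadTime b q u < caterpillarBeadTime b q v := by
  by_cases hs : 1 ≤ u ∧ u ≤ q
  · refine ⟨q + 2 * b + 2 + u, ⟨q + 2 * b + 2 + u, mem_arcs.mpr (by omega), ?_, ?_⟩, ?_⟩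
    all_goals simp only [caterpillarBeadTime, caterpillarBeadNet]
    all_goals split_ifs <;> omega
  · refine ⟨u + 1, ⟨u + 1, mem_arcs.mpr (by omega), ?_, ?_⟩, ?_⟩
    all_goals simp only [caterpillarBeadTime, caterpillarBeadNet]
    all_goals split_ifs <;> grind

theorem existsUnique_parent_time_eq (hq : 1 ≤ q) :
    ∃! u, IsParent (caterpillarBeadNet b q) u (q + 2 * b + 1) ∧
      caterpillarBeadTime b q u = caterpillarBeadTime b q (q + 2 * b + 1) := by
  refine ⟨q, ⟨⟨0, mem_arcs.mpr (by omega), src_zero, tgt_zero⟩, time_spineEnd_eq_time_ret hq⟩, ?_⟩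
  rintro u ⟨⟨a, ha, rfl, hta⟩, htime⟩
  have hmem : a ∈ inArcs (caterpillarBeadNet b q) (q + 2 * b + 1) := Finset.mem_filter.mpr ⟨ha, hta⟩
  rw [inArcs_ret hq, Finset.mem_insert, Finset.mem_singleton] at hmem
  rcases hmem with rfl | rfl
  · exact src_zero
  · have := time_src_lt_time_tgt hq (b := b) (a := q + 2 * b + 1) (by omega)
    rw [hta] at this
    omega

theorem isHGT (hq : 1 ≤ q) :
    IsHGT (caterpillarBeadNet b q) (fun v => (caterpillarBeadTime b q v : ℝ)) := by
  refine ⟨fun _ _ => Nat.cast_nonneg _, fun a ha => ?_, fun u hu hleaf => ?_, fun v hv hb => ?_⟩ <;>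
    beta_reduce <;> norm_cast
  · rcases eq_or_ne a 0 with rfl | h0
    · rw [src_zero, tgt_zero, time_spineEnd_eq_time_ret hq]
      exact ⟨fun _ => le_rfl, fun h => absurd (isReticN_ret hq) h⟩
    · have := time_src_lt_time_tgt (b := b) hq h0
      exact ⟨fun _ => this.le, fun _ => this⟩
  · exact exists_child_time_lt hq (not_le.mp fun hle => hleaf (isLeafN_of_le hle (mem_verts.mp hu)))
  · obtain rfl := eq_ret_of_isReticN hq hv hb
    exact existsUnique_parent_time_eq hq

theorem nPaths_beadTop_x₁ {k : ℕ} (hk : k ≤ b) :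
    nPaths (caterpillarBeadNet b q) (q + 2 * (b - k) + 1) (q + 2 * b + 2) = 2 ^ k := by
  induction k with
  | zero =>
    rw [arcsIncreasing.nPaths_eq_sum (by omega), Nat.sub_zero, outArcs_ret,
      Finset.sum_singleton, tgt_of_lt (by omega) (by omega),
      arcsIncreasing.nPaths_self (mem_verts.mpr (by omega)), pow_zero]
  | succ k ih =>
    obtain ⟨j, hj, hbk⟩ : ∃ j, j < b ∧ b - (k + 1) = j := ⟨_, by omega, rfl⟩
    have hbot : nPaths (caterpillarBeadNet b q) (q + 2 * j + 2) (q + 2 * b + 2) = 2 ^ k := by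
      rw [arcsIncreasing.nPaths_eq_sum (by omega), outArcs_beadBot hj, Finset.sum_singleton,
        tgt_of_lt (by omega) (by omega), ← ih (by omega)]
      congr 1
      omega
    rw [hbk, arcsIncreasing.nPaths_eq_sum (by omega), outArcs_beadTop hj,
      Finset.sum_pair (by omega), tgt_of_lt (by omega) (by omega), tgt_beadArc, hbot, pow_succ,
      mul_two]

theorem nPaths_leaf {v w : ℕ} (h1 : q + 2 * b + 2 ≤ v) (h2 : v < 2 * q + 2 * b + 3) :
    nPaths (caterpillarBeadNet b q) v w = if v = w then 1 else 0 := by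
  split_ifs with h
  · exact h ▸ arcsIncreasing.nPaths_self (mem_verts.mpr h2)
  · rw [arcsIncreasing.nPaths_eq_sum h, outArcs_leaf h1, Finset.sum_empty]

theorem nPaths_beadChain_pendant_eq_zero {u w : ℕ} (hu : q < u) (hu' : u ≤ q + 2 * b + 2)
    (hw : q + 2 * b + 2 < w) : nPaths (caterpillarBeadNet b q) u w = 0 := by
  refine nPaths_eq_zero_of_closed (S := {v | q < v ∧ v ≤ q + 2 * b + 2})
    (fun a _ hs => ?_) ⟨hu, hu'⟩ fun h => absurd h.2 (by omega)
  obtain ⟨hs₁, hs₂⟩ := hs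
  show q < _ ∧ _ ≤ _
  simp only [caterpillarBeadNet] at hs₁ hs₂ ⊢
  split_ifs at hs₁ hs₂ ⊢ <;> omega

theorem nPaths_spine_x₁ {i : ℕ} (h1 : 1 ≤ i) (hi : i ≤ q) :
    nPaths (caterpillarBeadNet b q) i (q + 2 * b + 2) = 1 := by
  induction h : q - i generalizing i with
  | zero =>
    obtain rfl : i = q := by omega
    rw [arcsIncreasing.nPaths_eq_sum (by omega), outArcs_spine h1 hi, if_neg (lt_irrefl _),
      Finset.sum_pair (by omega), tgt_zero, tgt_of_lt (by omega) (by omega),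
      nPaths_leaf (v := i + 2 * b + 2 + i) (by omega) (by omega), if_neg (by omega)]
    simpa using nPaths_beadTop_x₁ (q := i) (Nat.zero_le b)
  | succ d ih =>
    rw [arcsIncreasing.nPaths_eq_sum (by omega), outArcs_spine h1 hi, if_pos (by omega),
      Finset.sum_pair (by omega), tgt_of_lt (by omega) (by omega), tgt_of_lt (by omega) (by omega),
      ih (by omega) (by omega) (by omega),
      nPaths_leaf (v := q + 2 * b + 2 + i) (by omega) (by omega),
      if_neg (by omega)]

theorem nPaths_spine_pendant {i m : ℕ} (h1 : 1 ≤ i) (hi : i ≤ q) (hm₁ : 1 ≤ m) (hm : m ≤ q) :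
    nPaths (caterpillarBeadNet b q) i (q + 2 * b + 2 + m) = if i ≤ m then 1 else 0 := by
  induction h : q - i generalizing i with
  | zero =>
    obtain rfl : i = q := by omega
    rw [arcsIncreasing.nPaths_eq_sum (by omega), outArcs_spine h1 hi, if_neg (lt_irrefl _),
      Finset.sum_pair (by omega), tgt_zero, tgt_of_lt (by omega) (by omega),
      nPaths_leaf (v := i + 2 * b + 2 + i) (by omega) (by omega),
      nPaths_beadChain_pendant_eq_zero (by omega) (by omega) (by omega)]
    split_ifs <;> omega
  | succ d ih =>
    rw [arcsIncreasing.nPaths_eq_sum (by omega), outArcs_spine h1 hi, if_pos (by omega),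
      Finset.sum_pair (by omega), tgt_of_lt (by omega) (by omega), tgt_of_lt (by omega) (by omega),
      ih (by omega) (by omega) (by omega),
      nPaths_leaf (v := q + 2 * b + 2 + i) (by omega) (by omega)]
    split_ifs <;> omega

theorem nPaths_root_leaf (hq : 1 ≤ q) {i : ℕ} (hi : i ≤ q) :
    nPaths (caterpillarBeadNet b q) 0 (q + 2 * b + 2 + i) =
      ((2 ^ b + 1) :: List.replicate q 1).getD i 0 := by
  rw [arcsIncreasing.nPaths_eq_sum (by omega), outArcs_zero hq, Finset.sum_pair (by omega),
    tgt_of_lt (by omega) (by omega), tgt_of_lt (by omega) (by omega)]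
  rcases i with _ | i
  · rw [Nat.add_zero, nPaths_spine_x₁ le_rfl hq, List.getD_cons_zero, add_comm]
    simpa using nPaths_beadTop_x₁ (q := q) (le_refl b)
  · rw [nPaths_spine_pendant le_rfl hq (by omega) hi, if_pos (by omega),
      nPaths_beadChain_pendant_eq_zero (by omega) (by omega) (by omega), List.getD_cons_succ,
      List.getD_replicate _ (by omega)]

theorem realizesL (hq : 1 ≤ q) :
    RealizesL ⟨caterpillarBeadNet b q, fun i => q + 2 * b + 2 + i⟩
      ((2 ^ b + 1) :: List.replicate q 1) := by
  simp only [RealizesL, List.length_cons, List.length_replicate]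
  refine ⟨isPhylo hq, fun i hi => isLeafN_of_le (by omega) (by omega), fun i j _ _ h => by omega,
    fun v hv => ?_, fun i hi r hr => ?_⟩
  · have := le_of_isLeafN hq hv
    have := mem_verts.mp hv.1
    exact ⟨v - (q + 2 * b + 2), by omega, by omega⟩
  · rw [eq_zero_of_isRootN hq hr]
    exact nPaths_root_leaf hq (by omega)

end caterpillarBeadNet

/-- If `m = (n, n-1, …, 1)` with `n ≥ 3`, then for any ploidy
profile `m'` obtained from `m` by removing at most one of its components there is
a core network for `m'` admitting an HGT-consistent labelling. -/
theorem staircase_core_network_hgt (n : ℕ) (hn : 3 ≤ n) (m' : List ℕ)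
    (hm' : m' = (List.range n).reverse.map (· + 1) ∨
      ∃ i < n, m' = ((List.range n).reverse.map (· + 1)).eraseIdx i) :
    ∃ (mt : List ℕ) (R : LNet) (t : ℕ → ℝ),
      IsTerminal m' mt ∧ RealizesL R mt ∧ IsHGT R.net t := by
  obtain ⟨h, q, hh, hq, hterm⟩ := isTerminal_staircase_eraseIdx hn hm'
  obtain ⟨b, rfl⟩ : ∃ b, h = 2 ^ b + 1 := hh.elim (fun h2 => ⟨0, h2⟩) (fun h3 => ⟨1, h3⟩)
  exact ⟨_, _, _, hterm, caterpillarBeadNet.realizesL hq, caterpillarBeadNet.isHGT hq⟩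

end Ploidy
end
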